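/- arXiv:2505.09136 — 9 statements merged into one kernel-verified Lean document; each statement's English description precedes it below -/
import Mathlib

section
/- For every integer n ≥ 5, the characteristic polynomial of A(K_n,U_1^−) satisfies det(λI − A(K_n,U_1^−)) = (λ+1)^{n−3}(λ−1)(λ² + (4−n)λ + 7 − 3n). -/
open Matrix

/-- The signed-complete-graph matrix `A(K_n, H^-)`: zero diagonal, `-1` on edges of `H`
(vertices labelled `1, …, n`, index `i : Fin n` corresponds to label `i+1`), `+1` otherwise. -/
noncomputable def signMat (n : ℕ) (E : ℕ → ℕ → Prop) : Matrix (Fin n) (Fin n) ℝ :=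
  open scoped Classical in
  Matrix.of fun i j => if i = j then 0 else if E ((i : ℕ) + 1) ((j : ℕ) + 1) then -1 else 1

/-- The largest eigenvalue of a real matrix (the supremum of its spectrum). -/
noncomputable def lam1 {n : ℕ} (M : Matrix (Fin n) (Fin n) ℝ) : ℝ :=
  sSup (spectrum ℝ M)

/-- `{i, j} = {a, b}` as an (unordered) edge. -/
def adjPair (a b i j : ℕ) : Prop := (i = a ∧ j = b) ∨ (i = b ∧ j = a)

/-- `U₁`: triangle `1 2 3` together with the pendant edges `{1, i}` for `4 ≤ i ≤ n`;
i.e. vertex `1` is adjacent to every other vertex, plus the edge `{2,3}`. -/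
def U1edge (i j : ℕ) : Prop :=
  (i = 1 ∧ 2 ≤ j) ∨ (j = 1 ∧ 2 ≤ i) ∨ adjPair 2 3 i j

/-- `D_{1,n-3}`: edges `{1,2}`, `{2,3}` and `{3,i}` for `4 ≤ i ≤ n`. -/
def Dedge (i j : ℕ) : Prop :=
  adjPair 1 2 i j ∨ adjPair 2 3 i j ∨ (i = 3 ∧ 4 ≤ j) ∨ (j = 3 ∧ 4 ≤ i)

/-- `U₂`: triangles `1 2 3` and `1 4 5` sharing vertex `1`, plus pendant edges `{1,i}`
for `6 ≤ i ≤ n`; i.e. vertex `1` adjacent to all, plus edges `{2,3}` and `{4,5}`. -/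
def U2edge (i j : ℕ) : Prop :=
  (i = 1 ∧ 2 ≤ j) ∨ (j = 1 ∧ 2 ≤ i) ∨ adjPair 2 3 i j ∨ adjPair 4 5 i j

/-- `H₁(s,t)` on `n = s + t + 4` vertices: triangle `1 2 3`, `s` pendant vertices
`5, …, s+4` at vertex `1`, vertex `4` adjacent to `1`, and `t` pendant vertices
`s+5, …, s+t+4` at vertex `4`. -/
def H1edge (s t : ℕ) (i j : ℕ) : Prop :=
  adjPair 1 2 i j ∨ adjPair 1 3 i j ∨ adjPair 2 3 i j ∨ adjPair 1 4 i j ∨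
  (i = 1 ∧ 5 ≤ j ∧ j ≤ s + 4) ∨ (j = 1 ∧ 5 ≤ i ∧ i ≤ s + 4) ∨
  (i = 4 ∧ s + 5 ≤ j ∧ j ≤ s + t + 4) ∨ (j = 4 ∧ s + 5 ≤ i ∧ i ≤ s + t + 4)

/-- `H₂(s,t)` on `n = s + t + 5` vertices: triangle `1 2 3`, edges `{1,4}` and `{4,5}`,
`s` pendant vertices `6, …, s+5` at vertex `4`, and `t` pendant vertices
`s+6, …, s+t+5` at vertex `5`. -/
def H2edge (s t : ℕ) (i j : ℕ) : Prop :=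
  adjPair 1 2 i j ∨ adjPair 1 3 i j ∨ adjPair 2 3 i j ∨ adjPair 1 4 i j ∨ adjPair 4 5 i j ∨
  (i = 4 ∧ 6 ≤ j ∧ j ≤ s + 5) ∨ (j = 4 ∧ 6 ≤ i ∧ i ≤ s + 5) ∨
  (i = 5 ∧ s + 6 ≤ j ∧ j ≤ s + t + 5) ∨ (j = 5 ∧ s + 6 ≤ i ∧ i ≤ s + t + 5)

/-- `K_{1,s} ∪ t·P₂` on `n = s + 1 + 2t` vertices: star with center `1` and leaves
`2, …, s+1`, together with the `t` disjoint edges `{s+2k+2, s+2k+3}`, `0 ≤ k < t`. -/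
def starMatchEdge (s t : ℕ) (i j : ℕ) : Prop :=
  (i = 1 ∧ 2 ≤ j ∧ j ≤ s + 1) ∨ (j = 1 ∧ 2 ≤ i ∧ i ≤ s + 1) ∨
  (∃ k, k < t ∧ adjPair (s + 2 * k + 2) (s + 2 * k + 3) i j)

/-- The quotient matrix `Q₃(s,t)`. -/
noncomputable def Q3 (s t : ℕ) : Matrix (Fin 6) (Fin 6) ℝ :=
  !![0, -1, -1, -1, -(s : ℝ), (t : ℝ);
     -1, 0, -1, 1, (s : ℝ), (t : ℝ);
     -1, -1, 0, 1, (s : ℝ), (t : ℝ);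
     -1, 1, 1, 0, (s : ℝ), -(t : ℝ);
     -1, 1, 1, 1, (s : ℝ) - 1, (t : ℝ);
     1, 1, 1, -1, (s : ℝ), (t : ℝ) - 1]

/-- The quotient matrix `Q₄(s,t)`. -/
noncomputable def Q4 (s t : ℕ) : Matrix (Fin 7) (Fin 7) ℝ :=
  !![0, -1, -1, -1, 1, (s : ℝ), (t : ℝ);
     -1, 0, -1, 1, 1, (s : ℝ), (t : ℝ);
     -1, -1, 0, 1, 1, (s : ℝ), (t : ℝ);
     -1, 1, 1, 0, -1, -(s : ℝ), (t : ℝ);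
     1, 1, 1, -1, 0, (s : ℝ), -(t : ℝ);
     1, 1, 1, -1, 1, (s : ℝ) - 1, (t : ℝ);
     1, 1, 1, 1, -1, (s : ℝ), (t : ℝ) - 1]


/-! The pendant vertices `4, …, n` of `U₁` are pairwise twins. Moving all but one of them
into a block by a unimodular change of basis leaves `(λ + 1) I` on that block, so
`det(λI − A)` is `(λ + 1)^{n-4}` times the determinant of a `4 × 4` quotient matrix, in
which the column of the remaining twin carries the other `n − 4`. -/

namespace Matrix

variable {R η κ : Type*} [CommRing R] [Fintype η] [DecidableEq η] [Fintype κ] [DecidableEq κ]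

/-- The rows of the indices in `κ` agree with row `t` outside `κ ∪ {t}`, on which the matrix
is `(a - b) I + b J`; their columns `w` are arbitrary outside `κ ∪ {t}`. -/
theorem det_fromBlocks_twins (Q : Matrix η η R) (t : η) (w y : η → R) (a b : R)
    (hQ : Q t t = a) (hw : w t = b) (hyt : y t = b) (hy : ∀ j ≠ t, y j = Q t j) :
    (fromBlocks Q (of fun i (_ : κ) => w i) (of fun (_ : κ) j => y j)
        (of fun k l => if k = l then a else b)).det =
      (a - b) ^ Fintype.card κ * (Q.updateCol t fun i => Q i t + Fintype.card κ * w i).det := by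
  -- conjugate by `fromBlocks 1 0 E 1`: subtract row `t` from the twin rows and add the twin
  -- columns to column `t`
  set E : Matrix κ η R := of fun _ j => if j = t then 1 else 0
  have hD : -E * (of fun i (_ : κ) => w i) + (of fun k l => if k = l then a else b) =
      (a - b) • (1 : Matrix κ κ R) := by
    ext k l
    by_cases h : k = l <;> simp [E, mul_apply, hw, h, neg_add_eq_sub]
  have hconj : fromBlocks 1 0 (-E) 1 * (fromBlocks Q (of fun i (_ : κ) => w i)
      (of fun (_ : κ) j => y j) (of fun k l => if k = l then a else b)) * fromBlocks 1 0 E 1 =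
      fromBlocks (Q.updateCol t fun i => Q i t + Fintype.card κ * w i) (of fun i (_ : κ) => w i)
        0 ((a - b) • 1) := by
    simp only [fromBlocks_multiply, Matrix.one_mul, Matrix.mul_one, Matrix.zero_mul,
      Matrix.mul_zero, add_zero, zero_add, hD]
    congr 1
    · ext i j
      by_cases hj : j = t
      · subst hj
        simp [E, mul_apply, updateCol_self]
      · simp [E, mul_apply, hj]
    · ext k j
      by_cases hj : j = t
      · subst hj
        simp [E, mul_apply, hQ, hyt]
      · simp [E, mul_apply, hj, hy j hj]
  have hdet := congrArg det hconj
  rw [det_mul, det_mul, det_fromBlocks_zero₁₂, det_fromBlocks_zero₁₂,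
    det_fromBlocks_zero₂₁] at hdet
  simpa [det_smul, mul_comm] using hdet

end Matrix

open Matrix

theorem U1edge_succ_succ_iff {i j : ℕ} (h : i ≠ j) :
    U1edge (i + 1) (j + 1) ↔ i = 0 ∨ j = 0 ∨ (i = 1 ∧ j = 2) ∨ (i = 2 ∧ j = 1) := by
  simp only [U1edge, adjPair]
  omega

theorem sub_signMat_U1edge_apply (n : ℕ) (x : ℝ) (i j : Fin n) :
    (x • (1 : Matrix (Fin n) (Fin n) ℝ) - signMat n U1edge) i j =
      if (i : ℕ) = j then x
      else if (i : ℕ) = 0 ∨ (j : ℕ) = 0 ∨ ((i : ℕ) = 1 ∧ (j : ℕ) = 2) ∨ ((i : ℕ) = 2 ∧ (j : ℕ) = 1)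
        then 1 else -1 := by
  by_cases h : (i : ℕ) = j
  · simp [signMat, Fin.ext h]
  · simp only [Matrix.sub_apply, Matrix.smul_apply, one_apply, signMat, of_apply, Fin.ext_iff,
      if_neg h, U1edge_succ_succ_iff h]
    split_ifs <;> norm_num

/-- Vertices `1, 2, 3, 4` go to the first block, the pendant vertices `5, …, m + 4` to the
second. -/
theorem sub_signMat_U1edge_submatrix (m : ℕ) (x : ℝ) :
    (x • (1 : Matrix (Fin (4 + m)) (Fin (4 + m)) ℝ) - signMat (4 + m) U1edge).submatrix
        finSumFinEquiv finSumFinEquiv =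
      fromBlocks !![x, 1, 1, 1; 1, x, 1, -1; 1, 1, x, -1; 1, -1, -1, x]
        (of fun i (_ : Fin m) => if (i : ℕ) = 0 then 1 else -1)
        (of fun (_ : Fin m) j => if (j : ℕ) = 0 then 1 else -1)
        (of fun k l => if k = l then x else -1) := by
  ext (i | i) (j | j) <;>
    simp only [submatrix_apply, sub_signMat_U1edge_apply, finSumFinEquiv_apply_left,
      finSumFinEquiv_apply_right, Fin.val_castAdd, Fin.val_natAdd, fromBlocks_apply₁₁,
      fromBlocks_apply₁₂, fromBlocks_apply₂₁, fromBlocks_apply₂₂, of_apply, Fin.ext_iff]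
  · fin_cases i <;> fin_cases j <;> norm_num
  all_goals split_ifs <;> first | rfl | (exfalso; omega)

theorem det_U1_quotient (x c : ℝ) :
    !![x, 1, 1, 1 + c; 1, x, 1, -1 - c; 1, 1, x, -1 - c; 1, -1, -1, x - c].det =
      (x + 1) * (x - 1) * (x ^ 2 - c * x - 5 - 3 * c) := by
  simp [det_succ_row_zero, Fin.sum_univ_succ, Fin.succAbove]
  ring

theorem det_sub_signMat_U1edge (m : ℕ) (x : ℝ) :
    (x • (1 : Matrix (Fin (4 + m)) (Fin (4 + m)) ℝ) - signMat (4 + m) U1edge).det =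
      (x + 1) ^ (m + 1) * (x - 1) * (x ^ 2 - m * x - 5 - 3 * m) := by
  rw [← det_submatrix_equiv_self finSumFinEquiv, sub_signMat_U1edge_submatrix,
    det_fromBlocks_twins _ 3 _ _ x (-1) rfl (by simp) (by simp)
      (fun j hj => by fin_cases j <;> simp_all),
    Fintype.card_fin]
  have hquot : (!![x, 1, 1, 1; 1, x, 1, -1; 1, 1, x, -1; 1, -1, -1, x].updateCol 3
      fun i => !![x, 1, 1, 1; 1, x, 1, -1; 1, 1, x, -1; 1, -1, -1, x] i 3 +
        (m : ℝ) * if (i : ℕ) = 0 then 1 else -1) =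
      !![x, 1, 1, 1 + m; 1, x, 1, -1 - m; 1, 1, x, -1 - m; 1, -1, -1, x - m] := by
    ext i j
    fin_cases i <;> fin_cases j <;> simp <;> ring
  rw [hquot, det_U1_quotient, sub_neg_eq_add]
  ring

/-- for `n ≥ 5`,
`det(λI − A(K_n,U₁⁻)) = (λ+1)^{n−3} (λ−1) (λ² + (4−n)λ + 7 − 3n)`. -/
theorem stmt0 (n : ℕ) (hn : 5 ≤ n) (x : ℝ) :
    (x • (1 : Matrix (Fin n) (Fin n) ℝ) - signMat n U1edge).det =
      (x + 1) ^ (n - 3) * (x - 1) * (x ^ 2 + (4 - (n : ℝ)) * x + 7 - 3 * (n : ℝ)) := by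
  obtain ⟨m, rfl⟩ : ∃ m, n = 4 + m := ⟨n - 4, by omega⟩
  rw [det_sub_signMat_U1edge, show 4 + m - 3 = m + 1 by omega]
  push_cast
  ring
end

section
/- For every integer n ≥ 5, λ1(A(K_n,D_{1,n−3}^−)) < λ1(A(K_n,U_1^−)). -/
open Matrix

lemma det_fin_four' (M : Matrix (Fin 4) (Fin 4) ℝ) :
    M.det =
      M 0 0 * (M 1 1 * (M 2 2 * M 3 3 - M 2 3 * M 3 2) - M 1 2 * (M 2 1 * M 3 3 - M 2 3 * M 3 1)
        + M 1 3 * (M 2 1 * M 3 2 - M 2 2 * M 3 1))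
      - M 0 1 * (M 1 0 * (M 2 2 * M 3 3 - M 2 3 * M 3 2) - M 1 2 * (M 2 0 * M 3 3 - M 2 3 * M 3 0)
        + M 1 3 * (M 2 0 * M 3 2 - M 2 2 * M 3 0))
      + M 0 2 * (M 1 0 * (M 2 1 * M 3 3 - M 2 3 * M 3 1) - M 1 1 * (M 2 0 * M 3 3 - M 2 3 * M 3 0)
        + M 1 3 * (M 2 0 * M 3 1 - M 2 1 * M 3 0))
      - M 0 3 * (M 1 0 * (M 2 1 * M 3 2 - M 2 2 * M 3 1) - M 1 1 * (M 2 0 * M 3 2 - M 2 2 * M 3 0)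
        + M 1 2 * (M 2 0 * M 3 1 - M 2 1 * M 3 0)) := by
  simp [Matrix.det_succ_row_zero, Fin.sum_univ_succ,
    show (Fin.succ 2 : Fin 4) = 3 from rfl,
    show (Fin.succAbove 2 2 : Fin 4) = 3 from rfl,
    show (Fin.succAbove 1 2 : Fin 4) = 3 from rfl,
    show (Fin.castSucc 2 : Fin 4) = 2 from rfl,
    show (Fin.succAbove 3 2 : Fin 4) = 2 from rfl]
  ring

lemma specAux_mem {n : ℕ} (M : Matrix (Fin n) (Fin n) ℝ) (μ : ℝ) (v : Fin n → ℝ)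
    (hv : v ≠ 0) (hMv : M.mulVec v = μ • v) : μ ∈ spectrum ℝ M := by
  rw [spectrum.mem_iff]
  intro hunit
  rw [Matrix.isUnit_iff_isUnit_det] at hunit
  have hdet : (algebraMap ℝ (Matrix (Fin n) (Fin n) ℝ) μ - M).det = 0 := by
    rw [← Matrix.exists_mulVec_eq_zero_iff]
    refine ⟨v, hv, ?_⟩
    rw [Matrix.sub_mulVec, Algebra.algebraMap_eq_smul_one, Matrix.smul_mulVec,
      Matrix.one_mulVec, hMv, sub_self]
  rw [hdet] at hunit
  exact not_isUnit_zero hunit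

lemma specAux_vec {n : ℕ} (M : Matrix (Fin n) (Fin n) ℝ) (μ : ℝ)
    (hμ : μ ∈ spectrum ℝ M) : ∃ v, v ≠ 0 ∧ M.mulVec v = μ • v := by
  rw [spectrum.mem_iff] at hμ
  have hdet : (algebraMap ℝ (Matrix (Fin n) (Fin n) ℝ) μ - M).det = 0 := by
    by_contra h
    exact hμ ((Matrix.isUnit_iff_isUnit_det _).mpr (isUnit_iff_ne_zero.mpr h))
  obtain ⟨v, hv, h0⟩ := Matrix.exists_mulVec_eq_zero_iff.mpr hdet
  refine ⟨v, hv, ?_⟩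
  rw [Matrix.sub_mulVec, Algebra.algebraMap_eq_smul_one, Matrix.smul_mulVec,
    Matrix.one_mulVec, sub_eq_zero] at h0
  exact h0.symm

open scoped Classical in
lemma sum_ite_single {n : ℕ} (C : Fin n → Prop) (v : Fin n → ℝ) (b : Fin n)
    (h : ∀ j, C j ↔ j = b) : (∑ j, if C j then v j else 0) = v b := by
  rw [Finset.sum_congr rfl fun j _ => if_congr (h j) rfl rfl]
  simp

open scoped Classical in
lemma sum_ite_pair {n : ℕ} (C : Fin n → Prop) (v : Fin n → ℝ) (a b : Fin n) (hab : a ≠ b)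
    (h : ∀ j, C j ↔ j = a ∨ j = b) :
    (∑ j, if C j then v j else 0) = v a + v b := by
  have key : ∀ j : Fin n, (if C j then v j else 0)
      = (if j = a then v j else 0) + (if j = b then v j else 0) := by
    intro j
    by_cases ha : j = a
    · subst ha; rw [if_pos ((h j).mpr (Or.inl rfl)), if_pos rfl, if_neg hab]; ring
    · by_cases hb : j = b
      · subst hb; rw [if_pos ((h j).mpr (Or.inr rfl)), if_neg ha, if_pos rfl]; ring
      · rw [if_neg (fun hc => by rcases (h j).mp hc with h' | h'; exact ha h'; exact hb h'),
          if_neg ha, if_neg hb]; ring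
  rw [Finset.sum_congr rfl fun j _ => key j, Finset.sum_add_distrib]
  simp

open scoped Classical in
lemma sum_ite_not_single {n : ℕ} (C : Fin n → Prop) (v : Fin n → ℝ) (b : Fin n)
    (h : ∀ j, C j ↔ ¬ j = b) : (∑ j, if C j then v j else 0) = (∑ j, v j) - v b := by
  have key : ∀ j : Fin n, (if C j then v j else 0) = v j - (if j = b then v j else 0) := by
    intro j
    by_cases hb : j = b
    · rw [if_neg (fun hc => ((h j).mp hc) hb), if_pos hb]; ring
    · rw [if_pos ((h j).mpr hb), if_neg hb]; ring
  rw [Finset.sum_congr rfl fun j _ => key j, Finset.sum_sub_distrib]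
  simp

open scoped Classical in
lemma sum_ite_not_pair {n : ℕ} (C : Fin n → Prop) (v : Fin n → ℝ) (a b : Fin n) (hab : a ≠ b)
    (h : ∀ j, C j ↔ ¬ (j = a ∨ j = b)) :
    (∑ j, if C j then v j else 0) = (∑ j, v j) - v a - v b := by
  have key : ∀ j : Fin n, (if C j then v j else 0)
      = v j - (if j = a then v j else 0) - (if j = b then v j else 0) := by
    intro j
    by_cases ha : j = a
    · rw [if_neg (fun hc => ((h j).mp hc) (Or.inl ha)), if_pos ha]
      rw [if_neg (fun hb => hab (ha.symm.trans hb))]; ring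
    · by_cases hb : j = b
      · rw [if_neg (fun hc => ((h j).mp hc) (Or.inr hb)), if_neg ha, if_pos hb]; ring
      · rw [if_pos ((h j).mpr (by rintro (h' | h'); exact ha h'; exact hb h')), if_neg ha,
          if_neg hb]
        ring
  rw [Finset.sum_congr rfl fun j _ => key j, Finset.sum_sub_distrib, Finset.sum_sub_distrib]
  simp

open scoped Classical in
lemma mulVec_signMat {n : ℕ} (E : ℕ → ℕ → Prop) (hE : ∀ x, ¬ E x x) (v : Fin n → ℝ) (i : Fin n) :
    (signMat n E).mulVec v i
      = (∑ j, v j) - v i - 2 * ∑ j : Fin n, (if E ((i : ℕ) + 1) ((j : ℕ) + 1) then v j else 0) := by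
  have key : ∀ j : Fin n, signMat n E i j * v j
      = v j - (if j = i then v j else 0)
        - 2 * (if E ((i : ℕ) + 1) ((j : ℕ) + 1) then v j else 0) := by
    intro j
    simp only [signMat, Matrix.of_apply]
    rcases eq_or_ne j i with h | h
    · subst h
      rw [if_pos rfl, if_pos rfl, if_neg (hE _)]; ring
    · rw [if_neg (Ne.symm h), if_neg h]
      by_cases hE2 : E ((i : ℕ) + 1) ((j : ℕ) + 1)
      · rw [if_pos hE2, if_pos hE2]; ring
      · rw [if_neg hE2, if_neg hE2]; ring
  calc (signMat n E).mulVec v i = ∑ j, signMat n E i j * v j := rfl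
  _ = ∑ j, (v j - (if j = i then v j else 0)
        - 2 * (if E ((i : ℕ) + 1) ((j : ℕ) + 1) then v j else 0)) :=
      Finset.sum_congr rfl fun j _ => key j
  _ = _ := by
      rw [Finset.sum_sub_distrib, Finset.sum_sub_distrib, ← Finset.mul_sum]
      simp

lemma sum_split {n : ℕ} (hn : 5 ≤ n) (v : Fin n → ℝ) (c : ℝ)
    (p0 : 0 < n) (p1 : 1 < n) (p2 : 2 < n)
    (hc : ∀ i : Fin n, 3 ≤ (i : ℕ) → v i = c) :
    ∑ j, v j = v ⟨0, p0⟩ + v ⟨1, p1⟩ + v ⟨2, p2⟩ + ((n : ℝ) - 3) * c := by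
  classical
  have h1 : (Finset.univ.filter fun j : Fin n => (j : ℕ) < 3)
      = {⟨0, p0⟩, ⟨1, p1⟩, ⟨2, p2⟩} := by
    ext j
    simp only [Finset.mem_filter, Finset.mem_univ, true_and, Finset.mem_insert,
      Finset.mem_singleton, Fin.ext_iff, Fin.val_mk]
    omega
  have hcard : (Finset.univ.filter fun j : Fin n => ¬ (j : ℕ) < 3).card = n - 3 := by
    have h2 := Finset.card_filter_add_card_filter_not
      (s := (Finset.univ : Finset (Fin n))) (p := fun j : Fin n => (j : ℕ) < 3)
    have h3 : (Finset.univ.filter fun j : Fin n => (j : ℕ) < 3).card = 3 := by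
      rw [h1]
      rw [Finset.card_insert_of_notMem (by simp [Fin.ext_iff]),
        Finset.card_insert_of_notMem (by simp [Fin.ext_iff]), Finset.card_singleton]
    simp only [Finset.card_univ, Fintype.card_fin] at h2
    omega
  rw [← Finset.sum_filter_add_sum_filter_not Finset.univ (fun j : Fin n => (j : ℕ) < 3) v]
  rw [h1]
  rw [Finset.sum_insert (by simp [Fin.ext_iff]), Finset.sum_insert (by simp [Fin.ext_iff]),
    Finset.sum_singleton]
  have h4 : ∑ j ∈ Finset.univ.filter (fun j : Fin n => ¬ (j : ℕ) < 3), v j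
      = ((n : ℝ) - 3) * c := by
    rw [Finset.sum_congr rfl (fun j hj => hc j (by
      have := (Finset.mem_filter.mp hj).2
      omega))]
    rw [Finset.sum_const, hcard, nsmul_eq_mul, Nat.cast_sub (by omega)]
    norm_num
  rw [h4]
  ring

set_option maxHeartbeats 1600000 in
/-- for `n ≥ 5`, `λ₁(A(K_n,D_{1,n−3}⁻)) < λ₁(A(K_n,U₁⁻))`. -/
theorem stmt1 (n : ℕ) (hn : 5 ≤ n) :
    lam1 (signMat n Dedge) < lam1 (signMat n U1edge) := by
  classical
  have h5 : (5 : ℝ) ≤ (n : ℝ) := by exact_mod_cast hn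
  have hDirr : ∀ x, ¬ Dedge x x := by intro x; simp only [Dedge, adjPair]; omega
  have hUirr : ∀ x, ¬ U1edge x x := by intro x; simp only [U1edge, adjPair]; omega
  have l0 : 0 < n := by omega
  have l1 : 1 < n := by omega
  have l2 : 2 < n := by omega
  have l3 : 3 < n := by omega
  have l4 : 4 < n := by omega
  -- row indicator sums for D
  have TD0 : ∀ v : Fin n → ℝ,
      (∑ j : Fin n, if Dedge (((⟨0, l0⟩ : Fin n) : ℕ) + 1) ((j : ℕ) + 1) then v j else 0)
        = v ⟨1, l1⟩ := by
    intro v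
    apply sum_ite_single
    intro j
    rw [Fin.ext_iff]
    simp only [Dedge, adjPair, Fin.val_mk, true_and, and_true, false_and, and_false,
      false_or, or_false]
    omega
  have TD1 : ∀ v : Fin n → ℝ,
      (∑ j : Fin n, if Dedge (((⟨1, l1⟩ : Fin n) : ℕ) + 1) ((j : ℕ) + 1) then v j else 0)
        = v ⟨0, l0⟩ + v ⟨2, l2⟩ := by
    intro v
    apply sum_ite_pair _ _ _ _ (by simp [Fin.ext_iff])
    intro j
    rw [Fin.ext_iff, Fin.ext_iff]
    simp only [Dedge, adjPair, Fin.val_mk, true_and, and_true, false_and, and_false,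
      false_or, or_false]
    omega
  have TD2 : ∀ v : Fin n → ℝ,
      (∑ j : Fin n, if Dedge (((⟨2, l2⟩ : Fin n) : ℕ) + 1) ((j : ℕ) + 1) then v j else 0)
        = (∑ j, v j) - v ⟨0, l0⟩ - v ⟨2, l2⟩ := by
    intro v
    apply sum_ite_not_pair _ _ _ _ (by simp [Fin.ext_iff])
    intro j
    rw [Fin.ext_iff, Fin.ext_iff]
    simp only [Dedge, adjPair, Fin.val_mk, true_and, and_true, false_and, and_false,
      false_or, or_false]
    omega
  have TDtail : ∀ (v : Fin n → ℝ) (i : Fin n), 3 ≤ (i : ℕ) →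
      (∑ j : Fin n, if Dedge ((i : ℕ) + 1) ((j : ℕ) + 1) then v j else 0) = v ⟨2, l2⟩ := by
    intro v i hi
    apply sum_ite_single
    intro j
    rw [Fin.ext_iff]
    simp only [Dedge, adjPair, Fin.val_mk, true_and, and_true, false_and, and_false,
      false_or, or_false]
    omega
  -- row indicator sums for U
  have TU0 : ∀ v : Fin n → ℝ,
      (∑ j : Fin n, if U1edge (((⟨0, l0⟩ : Fin n) : ℕ) + 1) ((j : ℕ) + 1) then v j else 0)
        = (∑ j, v j) - v ⟨0, l0⟩ := by
    intro v
    apply sum_ite_not_single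
    intro j
    rw [Fin.ext_iff]
    simp only [U1edge, adjPair, Fin.val_mk, true_and, and_true, false_and, and_false,
      false_or, or_false]
    omega
  have TU1 : ∀ v : Fin n → ℝ,
      (∑ j : Fin n, if U1edge (((⟨1, l1⟩ : Fin n) : ℕ) + 1) ((j : ℕ) + 1) then v j else 0)
        = v ⟨0, l0⟩ + v ⟨2, l2⟩ := by
    intro v
    apply sum_ite_pair _ _ _ _ (by simp [Fin.ext_iff])
    intro j
    rw [Fin.ext_iff, Fin.ext_iff]
    simp only [U1edge, adjPair, Fin.val_mk, true_and, and_true, false_and, and_false,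
      false_or, or_false]
    omega
  have TU2 : ∀ v : Fin n → ℝ,
      (∑ j : Fin n, if U1edge (((⟨2, l2⟩ : Fin n) : ℕ) + 1) ((j : ℕ) + 1) then v j else 0)
        = v ⟨0, l0⟩ + v ⟨1, l1⟩ := by
    intro v
    apply sum_ite_pair _ _ _ _ (by simp [Fin.ext_iff])
    intro j
    rw [Fin.ext_iff, Fin.ext_iff]
    simp only [U1edge, adjPair, Fin.val_mk, true_and, and_true, false_and, and_false,
      false_or, or_false]
    omega
  have TUtail : ∀ (v : Fin n → ℝ) (i : Fin n), 3 ≤ (i : ℕ) →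
      (∑ j : Fin n, if U1edge ((i : ℕ) + 1) ((j : ℕ) + 1) then v j else 0) = v ⟨0, l0⟩ := by
    intro v i hi
    apply sum_ite_single
    intro j
    rw [Fin.ext_iff]
    simp only [U1edge, adjPair, Fin.val_mk, true_and, and_true, false_and, and_false,
      false_or, or_false]
    omega
  -- `-1` is an eigenvalue of the D matrix
  set w1 : Fin n → ℝ :=
    fun j => (if j = ⟨3, l3⟩ then (1 : ℝ) else 0) + (if j = ⟨4, l4⟩ then (-1 : ℝ) else 0)
    with hw1
  clear_value w1
  have hw1sum : ∑ j, w1 j = 0 := by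
    simp only [hw1]
    rw [Finset.sum_add_distrib]
    simp
  have hw1_0 : w1 ⟨0, l0⟩ = 0 := by simp [hw1, Fin.ext_iff]
  have hw1_1 : w1 ⟨1, l1⟩ = 0 := by simp [hw1, Fin.ext_iff]
  have hw1_2 : w1 ⟨2, l2⟩ = 0 := by simp [hw1, Fin.ext_iff]
  have hw1_3 : w1 ⟨3, l3⟩ = 1 := by simp [hw1, Fin.ext_iff]
  have hw1vec : (signMat n Dedge).mulVec w1 = (-1 : ℝ) • w1 := by
    funext i
    rw [mulVec_signMat Dedge hDirr w1 i]
    simp only [Pi.smul_apply, smul_eq_mul]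
    rcases (show (i : ℕ) = 0 ∨ (i : ℕ) = 1 ∨ (i : ℕ) = 2 ∨ 3 ≤ (i : ℕ) from by omega)
      with h | h | h | h
    · have hi : i = ⟨0, l0⟩ := by rw [Fin.ext_iff, Fin.val_mk]; exact h
      rw [hi, TD0 w1, hw1sum, hw1_0, hw1_1]; ring
    · have hi : i = ⟨1, l1⟩ := by rw [Fin.ext_iff, Fin.val_mk]; exact h
      rw [hi, TD1 w1, hw1sum, hw1_0, hw1_1, hw1_2]; ring
    · have hi : i = ⟨2, l2⟩ := by rw [Fin.ext_iff, Fin.val_mk]; exact h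
      rw [hi, TD2 w1, hw1sum, hw1_0, hw1_2]; ring
    · rw [TDtail w1 i h, hw1sum, hw1_2]; ring
  have hw1ne : w1 ≠ 0 := by
    intro h
    have := congrFun h ⟨3, l3⟩
    rw [hw1_3, Pi.zero_apply] at this
    norm_num at this
  have hmem1 : (-1 : ℝ) ∈ spectrum ℝ (signMat n Dedge) :=
    specAux_mem _ _ w1 hw1ne hw1vec
  have hfinD := Matrix.finite_spectrum (signMat n Dedge)
  have hfinU := Matrix.finite_spectrum (signMat n U1edge)
  have hlam_mem : lam1 (signMat n Dedge) ∈ spectrum ℝ (signMat n Dedge) :=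
    Set.Nonempty.csSup_mem ⟨-1, hmem1⟩ hfinD
  -- the explicit eigenvalue ν of the U matrix
  have hs0 : (0 : ℝ) ≤ (n : ℝ) ^ 2 + 4 * n - 12 := by nlinarith
  have hr2 : Real.sqrt ((n : ℝ) ^ 2 + 4 * n - 12) ^ 2 = (n : ℝ) ^ 2 + 4 * n - 12 :=
    Real.sq_sqrt hs0
  have hr0 : 0 ≤ Real.sqrt ((n : ℝ) ^ 2 + 4 * n - 12) := Real.sqrt_nonneg _
  set r := Real.sqrt ((n : ℝ) ^ 2 + 4 * n - 12) with hrdef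
  clear_value r
  set ν : ℝ := ((n : ℝ) - 4 + r) / 2 with hνdef
  clear_value ν
  have hq : ν ^ 2 - ((n : ℝ) - 4) * ν - (3 * (n : ℝ) - 7) = 0 := by
    rw [hνdef]; linear_combination hr2 / 4
  have hν3 : (n : ℝ) - 3 ≤ ν := by
    have hr : (n : ℝ) - 2 ≤ r := by nlinarith [hr2, hr0]
    rw [hνdef]; linarith
  -- explicit eigenvector of the U matrix for ν
  set va : ℝ := -(1 + ν) ^ 2 + ((n : ℝ) - 3) * (3 + ν) with hva
  clear_value va
  set vb : ℝ := 1 + ν with hvb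
  clear_value vb
  set vc : ℝ := 3 + ν with hvc
  clear_value vc
  set vU : Fin n → ℝ := fun j => if (j : ℕ) = 0 then va else if (j : ℕ) ≤ 2 then vb else vc
    with hvUdef
  clear_value vU
  have vU0 : vU ⟨0, l0⟩ = va := by simp [hvUdef]
  have vU1 : vU ⟨1, l1⟩ = vb := by simp [hvUdef]
  have vU2 : vU ⟨2, l2⟩ = vb := by simp [hvUdef]
  have vUtail : ∀ i : Fin n, 3 ≤ (i : ℕ) → vU i = vc := by
    intro i hi
    simp only [hvUdef]
    rw [if_neg (by omega), if_neg (by omega)]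
  have hSU : ∑ j, vU j = va + vb + vb + ((n : ℝ) - 3) * vc := by
    rw [sum_split hn vU vc l0 l1 l2 vUtail, vU0, vU1, vU2]
  have hvUvec : (signMat n U1edge).mulVec vU = ν • vU := by
    funext i
    rw [mulVec_signMat U1edge hUirr vU i]
    simp only [Pi.smul_apply, smul_eq_mul]
    rcases (show (i : ℕ) = 0 ∨ (i : ℕ) = 1 ∨ (i : ℕ) = 2 ∨ 3 ≤ (i : ℕ) from by omega)
      with h | h | h | h
    · have hi : i = ⟨0, l0⟩ := by rw [Fin.ext_iff, Fin.val_mk]; exact h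
      rw [hi, TU0 vU, hSU, vU0, hva, hvb, hvc]
      linear_combination (ν + 1) * hq
    · have hi : i = ⟨1, l1⟩ := by rw [Fin.ext_iff, Fin.val_mk]; exact h
      rw [hi, TU1 vU, hSU, vU0, vU1, vU2, hva, hvb, hvc]
      ring
    · have hi : i = ⟨2, l2⟩ := by rw [Fin.ext_iff, Fin.val_mk]; exact h
      rw [hi, TU2 vU, hSU, vU0, vU1, vU2, hva, hvb, hvc]
      ring
    · rw [TUtail vU i h, hSU, vUtail i h, vU0, hva, hvb, hvc]
      ring
  have hvUne : vU ≠ 0 := by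
    intro hzero
    have := congrFun hzero ⟨1, l1⟩
    rw [vU1, Pi.zero_apply, hvb] at this
    linarith
  have hνmem : ν ∈ spectrum ℝ (signMat n U1edge) := specAux_mem _ ν vU hvUne hvUvec
  have hν_le : ν ≤ lam1 (signMat n U1edge) := le_csSup hfinU.bddAbove hνmem
  -- main comparison
  rcases le_or_gt (lam1 (signMat n Dedge)) 1 with hcase | hcase
  · linarith
  · set L := lam1 (signMat n Dedge) with hLdef
    clear_value L
    obtain ⟨v, hvne, hvec⟩ := specAux_vec _ L hlam_mem
    have eqs : ∀ i : Fin n,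
        (∑ j, v j) - v i - 2 * (∑ j : Fin n, if Dedge ((i : ℕ) + 1) ((j : ℕ) + 1) then v j else 0)
          = L * v i := by
      intro i
      rw [← mulVec_signMat Dedge hDirr v i, hvec]
      simp
    have hL1 : (1 : ℝ) + L ≠ 0 := by intro h; linarith
    have hconst : ∀ i : Fin n, 3 ≤ (i : ℕ) → v i = v ⟨3, l3⟩ := by
      intro i hi
      have e1 := eqs i
      rw [TDtail v i hi] at e1
      have e2 := eqs ⟨3, l3⟩
      rw [TDtail v ⟨3, l3⟩ (by simp [Fin.val_mk])] at e2
      have h3 : (1 + L) * (v i - v ⟨3, l3⟩) = 0 := by linear_combination e2 - e1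
      rcases mul_eq_zero.mp h3 with h' | h'
      · exact absurd h' hL1
      · exact sub_eq_zero.mp h'
    have hS : ∑ j, v j = v ⟨0, l0⟩ + v ⟨1, l1⟩ + v ⟨2, l2⟩ + ((n : ℝ) - 3) * v ⟨3, l3⟩ :=
      sum_split hn v (v ⟨3, l3⟩) l0 l1 l2 hconst
    have E0 := eqs ⟨0, l0⟩
    rw [TD0 v, hS] at E0
    have E1 := eqs ⟨1, l1⟩
    rw [TD1 v, hS] at E1
    have E2 := eqs ⟨2, l2⟩
    rw [TD2 v, hS] at E2
    have E3 := eqs ⟨3, l3⟩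
    rw [TDtail v ⟨3, l3⟩ (by simp [Fin.val_mk]), hS] at E3
    have hnz : ¬ (v ⟨0, l0⟩ = 0 ∧ v ⟨1, l1⟩ = 0 ∧ v ⟨2, l2⟩ = 0 ∧ v ⟨3, l3⟩ = 0) := by
      rintro ⟨z0, z1, z2, z3⟩
      apply hvne
      funext i
      simp only [Pi.zero_apply]
      rcases (show (i : ℕ) = 0 ∨ (i : ℕ) = 1 ∨ (i : ℕ) = 2 ∨ 3 ≤ (i : ℕ) from by omega)
        with h | h | h | h
      · rw [show i = ⟨0, l0⟩ from by rw [Fin.ext_iff, Fin.val_mk]; exact h]; exact z0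
      · rw [show i = ⟨1, l1⟩ from by rw [Fin.ext_iff, Fin.val_mk]; exact h]; exact z1
      · rw [show i = ⟨2, l2⟩ from by rw [Fin.ext_iff, Fin.val_mk]; exact h]; exact z2
      · rw [hconst i h]; exact z3
    set B : Matrix (Fin 4) (Fin 4) ℝ :=
      !![-L, -1, 1, (n : ℝ) - 3;
         -1, -L, -1, (n : ℝ) - 3;
         1, -1, -L, -((n : ℝ) - 3);
         1, 1, -1, (n : ℝ) - 3 - 1 - L] with hB
    clear_value B
    set w : Fin 4 → ℝ := ![v ⟨0, l0⟩, v ⟨1, l1⟩, v ⟨2, l2⟩, v ⟨3, l3⟩] with hw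
    clear_value w
    have hBw : B.mulVec w = 0 := by
      funext k
      fin_cases k <;>
        simp [hB, hw, Matrix.mulVec, dotProduct, Fin.sum_univ_four] <;>
        linarith [E0, E1, E2, E3]
    have hwne : w ≠ 0 := by
      intro h
      apply hnz
      refine ⟨?_, ?_, ?_, ?_⟩
      · have := congrFun h 0; simpa [hw] using this
      · have := congrFun h 1; simpa [hw] using this
      · have := congrFun h 2; simpa [hw] using this
      · have := congrFun h 3; simpa [hw] using this
    have hdet : B.det = 0 := Matrix.exists_mulVec_eq_zero_iff.mp ⟨w, hwne, hBw⟩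
    rw [det_fin_four' B] at hdet
    simp only [hB, Matrix.cons_val', Matrix.cons_val_zero, Matrix.cons_val_one,
      Matrix.cons_val_two, Matrix.cons_val_three, Matrix.head_cons, Matrix.tail_cons,
      Matrix.empty_val', Matrix.cons_val_fin_one, Matrix.of_apply, Matrix.head_fin_const] at hdet
    have hcube : L ^ 3 - ((n : ℝ) - 3) * L ^ 2 - (2 * (n : ℝ) - 3) * L + (7 * (n : ℝ) - 23)
        = 0 := by
      have hfac : (1 + L) *
          (L ^ 3 - ((n : ℝ) - 3) * L ^ 2 - (2 * (n : ℝ) - 3) * L + (7 * (n : ℝ) - 23)) = 0 := by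
        linear_combination hdet
      rcases mul_eq_zero.mp hfac with h' | h'
      · exact absurd h' hL1
      · exact h'
    have hqL : L ^ 2 - ((n : ℝ) - 4) * L - (3 * (n : ℝ) - 7) < 0 := by
      have hfac2 : (L - 1) * (L ^ 2 - ((n : ℝ) - 4) * L - (3 * (n : ℝ) - 7))
          = -(4 * (n : ℝ) - 16) := by
        linear_combination hcube
      nlinarith [hfac2, hcase, h5]
    have hLν : L < ν := by
      by_contra hcon
      push_neg at hcon
      nlinarith [hq, hqL, hν3, hcon, h5,
        mul_nonneg (by linarith : (0 : ℝ) ≤ L - ν)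
          (by linarith : (0 : ℝ) ≤ L + ν - ((n : ℝ) - 4))]
    linarith
end

section
/- For every integer n ≥ 6, the characteristic polynomial of A(K_n,U_2^−) satisfies det(λI − A(K_n,U_2^−)) = (λ+1)^{n−5}(λ−1)²(λ+3)(λ² + (4−n)λ + 11 − 3n). -/
open Matrix

/-!
With `B` the adjacency matrix of `U₂`, `A(K_n, U₂⁻) = J - I - 2B`, so
`λI - A = (λ + 1)I + (2B - J)` and `2B - J` has rank at most 6. Write `2B - J = U₁V₁ + U₂V₂`,
where the rows of `V₁` (`quotientRight`) are `𝟙, e₁, e₂ + e₃ + e₄ + e₅`, spanning the vectors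
constant on the cells `{1}, {2, 3, 4, 5}, {6, …, n}`, and the rows of `V₂` (`eigenRight`) are the
eigenvectors `e₂ + e₃ - e₄ - e₅, e₂ - e₃, e₄ - e₅` of `A`, orthogonal to the columns of `U₁`.
Sylvester's identity `det (tIₙ + UV) = t^(n-k) det (tIₖ + VU)` turns the determinant into that of
a block triangular `6 × 6` matrix, whose `3 × 3` quotient block gives
`(λ + 1)(λ² + (4 - n)λ + 11 - 3n)` and whose diagonal eigenvector block gives `(λ + 3)(λ - 1)²`.
-/

namespace Matrix

theorem of_mul_transpose_of_apply {R ι κ m : Type*} [Mul R] [AddCommMonoid R] [Fintype m]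
    (r : ι → m → R) (c : κ → m → R) (i : ι) (j : κ) : (of r * (of c)ᵀ) i j = r i ⬝ᵥ c j :=
  rfl

section Sylvester

variable {R m k k₁ k₂ : Type*} [CommRing R] [Fintype m] [DecidableEq m]

theorem det_smul_one_add_mul_of_card_le [Fintype k] [DecidableEq k]
    (U : Matrix m k R) (V : Matrix k m R) (hle : Fintype.card k ≤ Fintype.card m) (t : R) :
    (t • (1 : Matrix m m R) + U * V).det =
      t ^ (Fintype.card m - Fintype.card k) * (t • (1 : Matrix k k R) + V * U).det := by
  simpa [eval_charpoly, smul_one_eq_diagonal, sub_eq_add_neg] using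
    congrArg (Polynomial.eval t) (charpoly_mul_comm_of_le (-U) V hle)

theorem det_smul_one_add_mul_add_mul_of_mul_eq_zero [Fintype k₁] [DecidableEq k₁]
    [Fintype k₂] [DecidableEq k₂] (U₁ : Matrix m k₁ R) (V₁ : Matrix k₁ m R)
    (U₂ : Matrix m k₂ R) (V₂ : Matrix k₂ m R) (h : V₂ * U₁ = 0)
    (hle : Fintype.card k₁ + Fintype.card k₂ ≤ Fintype.card m) (t : R) :
    (t • (1 : Matrix m m R) + (U₁ * V₁ + U₂ * V₂)).det =
      t ^ (Fintype.card m - (Fintype.card k₁ + Fintype.card k₂)) *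
        (t • (1 : Matrix k₁ k₁ R) + V₁ * U₁).det * (t • (1 : Matrix k₂ k₂ R) + V₂ * U₂).det := by
  rw [← fromCols_mul_fromRows, det_smul_one_add_mul_of_card_le _ _ (by simpa using hle),
    fromRows_mul_fromCols, h, ← fromBlocks_one, fromBlocks_smul, fromBlocks_add]
  simp only [smul_zero, add_zero]
  rw [det_fromBlocks_zero₂₁, Fintype.card_sum, mul_assoc]

end Sylvester

end Matrix

/-- Indexed by `p : ℕ` so that no bound `p < n` is carried around; it is `0` when `p ≥ n`.
Index `p` stands for the vertex labelled `p + 1`. -/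
def stdVec (R : Type*) [Zero R] [One R] (n p : ℕ) : Fin n → R :=
  fun i => if (i : ℕ) = p then 1 else 0

section stdVec

variable {R : Type*} [NonAssocSemiring R] {n p q : ℕ}

theorem stdVec_eq_single (hp : p < n) : stdVec R n p = Pi.single ⟨p, hp⟩ 1 := by
  ext i
  simp [stdVec, Pi.single_apply, Fin.ext_iff]

@[simp]
theorem one_dotProduct_stdVec (hp : p < n) : 1 ⬝ᵥ stdVec R n p = 1 := by
  simp [stdVec_eq_single hp]

@[simp]
theorem stdVec_dotProduct_one (hp : p < n) : stdVec R n p ⬝ᵥ 1 = 1 := by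
  simp [stdVec_eq_single hp]

@[simp]
theorem stdVec_dotProduct_stdVec (hp : p < n) :
    stdVec R n p ⬝ᵥ stdVec R n q = if p = q then 1 else 0 := by
  simp [stdVec_eq_single hp, stdVec]

end stdVec

namespace U2

variable (n : ℕ)

noncomputable def quotientLeft : Matrix (Fin n) (Fin 3) ℝ :=
  (of ![(2 : ℝ) • stdVec ℝ n 0 - 1, (2 : ℝ) • 1 - (4 : ℝ) • stdVec ℝ n 0,
    (1 / 2 : ℝ) • (stdVec ℝ n 1 + stdVec ℝ n 2 + stdVec ℝ n 3 + stdVec ℝ n 4)])ᵀ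

noncomputable def quotientRight : Matrix (Fin 3) (Fin n) ℝ :=
  of ![1, stdVec ℝ n 0, stdVec ℝ n 1 + stdVec ℝ n 2 + stdVec ℝ n 3 + stdVec ℝ n 4]

noncomputable def eigenLeft : Matrix (Fin n) (Fin 3) ℝ :=
  (of ![(1 / 2 : ℝ) • (stdVec ℝ n 1 + stdVec ℝ n 2 - stdVec ℝ n 3 - stdVec ℝ n 4),
    stdVec ℝ n 2 - stdVec ℝ n 1, stdVec ℝ n 4 - stdVec ℝ n 3])ᵀ

noncomputable def eigenRight : Matrix (Fin 3) (Fin n) ℝ :=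
  of ![stdVec ℝ n 1 + stdVec ℝ n 2 - stdVec ℝ n 3 - stdVec ℝ n 4,
    stdVec ℝ n 1 - stdVec ℝ n 2, stdVec ℝ n 3 - stdVec ℝ n 4]

theorem smul_one_sub_signMat_U2edge (x : ℝ) :
    x • (1 : Matrix (Fin n) (Fin n) ℝ) - signMat n U2edge =
      (x + 1) • 1 + (quotientLeft n * quotientRight n + eigenLeft n * eigenRight n) := by
  ext ⟨a, ha⟩ ⟨b, hb⟩
  simp only [signMat, quotientLeft, quotientRight, eigenLeft, eigenRight, stdVec,
    Matrix.sub_apply, Matrix.add_apply, Matrix.smul_apply, one_apply, of_apply, mul_apply,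
    transpose_apply, Fin.sum_univ_three, Fin.mk.injEq, cons_val_zero, cons_val_one, cons_val,
    Pi.add_apply, Pi.sub_apply, Pi.smul_apply, Pi.one_apply, smul_eq_mul]
  rcases a with _|_|_|_|_|a <;> rcases b with _|_|_|_|_|b <;> simp [U2edge, adjPair] <;> norm_num
  split_ifs <;> ring

variable {n}

theorem quotientRight_mul_quotientLeft (hn : 5 ≤ n) :
    quotientRight n * quotientLeft n = !![2 - (n : ℝ), 2 * n - 4, 2; 1, -2, 0; -4, 8, 2] := by
  ext k l
  fin_cases k <;> fin_cases l <;>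
    simp (disch := omega) [quotientLeft, quotientRight, of_mul_transpose_of_apply] <;> norm_num

theorem eigenRight_mul_quotientLeft (hn : 5 ≤ n) : eigenRight n * quotientLeft n = 0 := by
  ext k l
  fin_cases k <;> fin_cases l <;>
    simp (disch := omega) [quotientLeft, eigenRight, of_mul_transpose_of_apply]

theorem eigenRight_mul_eigenLeft (hn : 5 ≤ n) :
    eigenRight n * eigenLeft n = diagonal ![2, -2, -2] := by
  ext k l
  fin_cases k <;> fin_cases l <;>
    simp (disch := omega) [eigenLeft, eigenRight, of_mul_transpose_of_apply] <;> norm_num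

end U2

open U2 in
/-- for `n ≥ 6`,
`det(λI − A(K_n,U₂⁻)) = (λ+1)^{n−5} (λ−1)² (λ+3) (λ² + (4−n)λ + 11 − 3n)`. -/
theorem stmt2 (n : ℕ) (hn : 6 ≤ n) (x : ℝ) :
    (x • (1 : Matrix (Fin n) (Fin n) ℝ) - signMat n U2edge).det =
      (x + 1) ^ (n - 5) * (x - 1) ^ 2 * (x + 3) *
        (x ^ 2 + (4 - (n : ℝ)) * x + 11 - 3 * (n : ℝ)) := by
  have hquot : ((x + 1) • (1 : Matrix (Fin 3) (Fin 3) ℝ) +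
      !![2 - (n : ℝ), 2 * n - 4, 2; 1, -2, 0; -4, 8, 2]).det =
      (x + 1) * (x ^ 2 + (4 - (n : ℝ)) * x + 11 - 3 * (n : ℝ)) := by
    rw [det_fin_three]
    simp only [Matrix.add_apply, Matrix.smul_apply, one_apply, of_apply, cons_val', cons_val_zero,
      cons_val_one, cons_val, cons_val_fin_one, Fin.isValue, Fin.reduceEq, ↓reduceIte, smul_eq_mul]
    ring
  have heigen : ((x + 1) • (1 : Matrix (Fin 3) (Fin 3) ℝ) + diagonal ![2, -2, -2]).det =
      (x + 3) * (x - 1) ^ 2 := by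
    rw [smul_one_eq_diagonal, diagonal_add, det_diagonal, Fin.prod_univ_three]
    simp only [cons_val_zero, cons_val_one, cons_val]
    ring
  rw [smul_one_sub_signMat_U2edge, det_smul_one_add_mul_add_mul_of_mul_eq_zero _ _ _ _
    (eigenRight_mul_quotientLeft (by omega)) (by simpa using hn),
    quotientRight_mul_quotientLeft (by omega), eigenRight_mul_eigenLeft (by omega), hquot, heigen,
    Fintype.card_fin, Fintype.card_fin, show n - 5 = n - (3 + 3) + 1 by omega]
  ring
end

section
/- For every integer n ≥ 9, λ1(A(K_n,U_2^−)) > n/2 − 1. -/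
open Matrix

/-! The vertices with labels other than `1, 3, 5` form an independent set of size `n - 3` in `U₂`,
so the principal submatrix of `A(K_n, U₂⁻)` on them is `J - I`. The Rayleigh quotient of its
indicator vector gives `λ₁ ≥ n - 4`, which exceeds `n/2 - 1` once `n > 6`. -/

open Finset

namespace Matrix

variable {ι : Type*} [Fintype ι] [DecidableEq ι]

theorem IsHermitian.dotProduct_mulVec_le_sSup_spectrum {A : Matrix ι ι ℝ} (hA : A.IsHermitian)
    (x : ι → ℝ) : x ⬝ᵥ A *ᵥ x ≤ sSup (spectrum ℝ A) * (x ⬝ᵥ x) := by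
  set c := sSup (spectrum ℝ A)
  have hpsd : (algebraMap ℝ _ c - A).PosSemidef := by
    refine posSemidef_iff_isHermitian_and_spectrum_nonneg.2 ⟨?_, ?_⟩
    · exact (isHermitian_diagonal _).sub hA
    · rw [← spectrum.singleton_sub_eq]
      rintro _ ⟨_, rfl, μ, hμ, rfl⟩
      exact sub_nonneg.2 (le_csSup A.finite_real_spectrum.bddAbove hμ)
  have := hpsd.dotProduct_mulVec_nonneg x
  rw [Algebra.algebraMap_eq_smul_one, sub_mulVec, smul_mulVec, one_mulVec, dotProduct_sub,
    dotProduct_smul, smul_eq_mul, star_trivial] at this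
  linarith

theorem IsHermitian.sum_submatrix_le_sSup_spectrum_mul_card {A : Matrix ι ι ℝ}
    (hA : A.IsHermitian) (S : Finset ι) :
    ∑ i ∈ S, ∑ j ∈ S, A i j ≤ sSup (spectrum ℝ A) * #S := by
  have := hA.dotProduct_mulVec_le_sSup_spectrum fun i => if i ∈ S then 1 else 0
  simpa [dotProduct, mulVec, sum_ite_mem] using this

end Matrix

theorem signMat_isHermitian (n : ℕ) (E : ℕ → ℕ → Prop) [Std.Symm E] :
    (signMat n E).IsHermitian := by
  ext i j
  simp only [signMat, conjTranspose_apply, of_apply, star_trivial]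
  classical
  exact if_congr eq_comm rfl (if_congr (comm_of E) rfl rfl)

theorem sum_signMat_of_independent {n : ℕ} {E : ℕ → ℕ → Prop} {S : Finset (Fin n)}
    (hS : ∀ i ∈ S, ∀ j ∈ S, ¬ E (i + 1) (j + 1)) :
    ∑ i ∈ S, ∑ j ∈ S, signMat n E i j = #S * (#S - 1) := by
  have hrow : ∀ i ∈ S, ∑ j ∈ S, signMat n E i j = #S - 1 := by
    intro i hi
    calc ∑ j ∈ S, signMat n E i j = ∑ j ∈ S, (1 - if i = j then 1 else 0) :=
          sum_congr rfl fun j hj => by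
            by_cases hij : i = j <;> simp [signMat, hij, hS i hi j hj]
      _ = #S - 1 := by simp [sum_sub_distrib, hi]
  rw [sum_congr rfl hrow, sum_const, nsmul_eq_mul]

theorem sub_one_le_lam1_signMat {n : ℕ} {E : ℕ → ℕ → Prop} [Std.Symm E]
    {S : Finset (Fin n)} (hSne : S.Nonempty) (hS : ∀ i ∈ S, ∀ j ∈ S, ¬ E (i + 1) (j + 1)) :
    (#S : ℝ) - 1 ≤ lam1 (signMat n E) := by
  have hcard : (0 : ℝ) < #S := by exact_mod_cast hSne.card_pos
  have := (signMat_isHermitian n E).sum_submatrix_le_sSup_spectrum_mul_card S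
  rw [sum_signMat_of_independent hS, mul_comm] at this
  exact le_of_mul_le_mul_right this hcard

instance : Std.Symm U2edge where
  symm i j := by
    simp only [U2edge, adjPair]
    omega

theorem not_U2edge {a b : ℕ} (ha : a ∉ ({1, 3, 5} : Finset ℕ)) (hb : b ∉ ({1, 3, 5} : Finset ℕ)) :
    ¬ U2edge a b := by
  simp only [mem_insert, mem_singleton] at ha hb
  simp only [U2edge, adjPair]
  omega

theorem le_card_filter_succ_notMem_add_card (n : ℕ) (T : Finset ℕ) :
    n ≤ #{i : Fin n | (i : ℕ) + 1 ∉ T} + #T := by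
  have hT : #{i : Fin n | (i : ℕ) + 1 ∈ T} ≤ #T :=
    card_le_card_of_injOn (fun i => (i : ℕ) + 1) (fun i hi => (mem_filter.1 hi).2)
      fun i _ j _ hij => Fin.ext (Nat.add_right_cancel hij)
  have := card_filter_add_card_filter_not (s := univ) fun i : Fin n => (i : ℕ) + 1 ∈ T
  rw [card_univ, Fintype.card_fin] at this
  omega

/-- for `n ≥ 9`, `λ₁(A(K_n,U₂⁻)) > n/2 − 1`. -/
theorem stmt3 (n : ℕ) (hn : 9 ≤ n) :
    lam1 (signMat n U2edge) > (n : ℝ) / 2 - 1 := by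
  set S : Finset (Fin n) := {i | (i : ℕ) + 1 ∉ ({1, 3, 5} : Finset ℕ)}
  have hcard : n ≤ #S + 3 := le_card_filter_succ_notMem_add_card n {1, 3, 5}
  have hSne : S.Nonempty := card_pos.1 (by omega)
  have hlam := sub_one_le_lam1_signMat hSne fun i hi j hj =>
    not_U2edge (mem_filter.1 hi).2 (mem_filter.1 hj).2
  have : (n : ℝ) ≤ #S + 3 := by exact_mod_cast hcard
  have : (9 : ℝ) ≤ n := by exact_mod_cast hn
  linarith
end

section
/- For all integers s, t ≥ 1 with n = s + t + 4, the characteristic polynomial of the 6×6 real matrix Q_3(s,t) satisfies det(λI − Q_3(s,t)) = (λ−1)(λ+1)(λ⁴ − (n−6)λ³ − (5n−16)λ² + (8st − 7s + 9t − 10)λ + 24st − 3s + 13t − 5). -/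
open Matrix

lemma cv2 {α : Type*} {m : ℕ} (x : α) (u : Fin (m+2) → α) : Matrix.vecCons x u 2 = u 1 := rfl
lemma cv3 {α : Type*} {m : ℕ} (x : α) (u : Fin (m+3) → α) : Matrix.vecCons x u 3 = u 2 := rfl
lemma cv4 {α : Type*} {m : ℕ} (x : α) (u : Fin (m+4) → α) : Matrix.vecCons x u 4 = u 3 := rfl
lemma cv5 {α : Type*} {m : ℕ} (x : α) (u : Fin (m+5) → α) : Matrix.vecCons x u 5 = u 4 := rfl
lemma fs1_0 : Fin.succ (0 : Fin 1) = (1 : Fin 2) := rfl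
lemma fv1_0 : ((0 : Fin 1) : ℕ) = 0 := rfl
lemma fs2_0 : Fin.succ (0 : Fin 2) = (1 : Fin 3) := rfl
lemma fv2_0 : ((0 : Fin 2) : ℕ) = 0 := rfl
lemma fs2_1 : Fin.succ (1 : Fin 2) = (2 : Fin 3) := rfl
lemma fv2_1 : ((1 : Fin 2) : ℕ) = 1 := rfl
lemma fs3_0 : Fin.succ (0 : Fin 3) = (1 : Fin 4) := rfl
lemma fv3_0 : ((0 : Fin 3) : ℕ) = 0 := rfl
lemma fs3_1 : Fin.succ (1 : Fin 3) = (2 : Fin 4) := rfl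
lemma fv3_1 : ((1 : Fin 3) : ℕ) = 1 := rfl
lemma fs3_2 : Fin.succ (2 : Fin 3) = (3 : Fin 4) := rfl
lemma fv3_2 : ((2 : Fin 3) : ℕ) = 2 := rfl
lemma fs4_0 : Fin.succ (0 : Fin 4) = (1 : Fin 5) := rfl
lemma fv4_0 : ((0 : Fin 4) : ℕ) = 0 := rfl
lemma fs4_1 : Fin.succ (1 : Fin 4) = (2 : Fin 5) := rfl
lemma fv4_1 : ((1 : Fin 4) : ℕ) = 1 := rfl
lemma fs4_2 : Fin.succ (2 : Fin 4) = (3 : Fin 5) := rfl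
lemma fv4_2 : ((2 : Fin 4) : ℕ) = 2 := rfl
lemma fs4_3 : Fin.succ (3 : Fin 4) = (4 : Fin 5) := rfl
lemma fv4_3 : ((3 : Fin 4) : ℕ) = 3 := rfl
lemma fs5_0 : Fin.succ (0 : Fin 5) = (1 : Fin 6) := rfl
lemma fv5_0 : ((0 : Fin 5) : ℕ) = 0 := rfl
lemma fs5_1 : Fin.succ (1 : Fin 5) = (2 : Fin 6) := rfl
lemma fv5_1 : ((1 : Fin 5) : ℕ) = 1 := rfl
lemma fs5_2 : Fin.succ (2 : Fin 5) = (3 : Fin 6) := rfl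
lemma fv5_2 : ((2 : Fin 5) : ℕ) = 2 := rfl
lemma fs5_3 : Fin.succ (3 : Fin 5) = (4 : Fin 6) := rfl
lemma fv5_3 : ((3 : Fin 5) : ℕ) = 3 := rfl
lemma fs5_4 : Fin.succ (4 : Fin 5) = (5 : Fin 6) := rfl
lemma fv5_4 : ((4 : Fin 5) : ℕ) = 4 := rfl
lemma fs6_0 : Fin.succ (0 : Fin 6) = (1 : Fin 7) := rfl
lemma fv6_0 : ((0 : Fin 6) : ℕ) = 0 := rfl
lemma fs6_1 : Fin.succ (1 : Fin 6) = (2 : Fin 7) := rfl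
lemma fv6_1 : ((1 : Fin 6) : ℕ) = 1 := rfl
lemma fs6_2 : Fin.succ (2 : Fin 6) = (3 : Fin 7) := rfl
lemma fv6_2 : ((2 : Fin 6) : ℕ) = 2 := rfl
lemma fs6_3 : Fin.succ (3 : Fin 6) = (4 : Fin 7) := rfl
lemma fv6_3 : ((3 : Fin 6) : ℕ) = 3 := rfl
lemma fs6_4 : Fin.succ (4 : Fin 6) = (5 : Fin 7) := rfl
lemma fv6_4 : ((4 : Fin 6) : ℕ) = 4 := rfl
lemma fs6_5 : Fin.succ (5 : Fin 6) = (6 : Fin 7) := rfl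
lemma fv6_5 : ((5 : Fin 6) : ℕ) = 5 := rfl
lemma sa1_0_0 : Fin.succAbove (0 : Fin 2) (0 : Fin 1) = (1 : Fin 2) := rfl
lemma sa1_1_0 : Fin.succAbove (1 : Fin 2) (0 : Fin 1) = (0 : Fin 2) := rfl
lemma sa2_0_0 : Fin.succAbove (0 : Fin 3) (0 : Fin 2) = (1 : Fin 3) := rfl
lemma sa2_0_1 : Fin.succAbove (0 : Fin 3) (1 : Fin 2) = (2 : Fin 3) := rfl
lemma sa2_1_0 : Fin.succAbove (1 : Fin 3) (0 : Fin 2) = (0 : Fin 3) := rfl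
lemma sa2_1_1 : Fin.succAbove (1 : Fin 3) (1 : Fin 2) = (2 : Fin 3) := rfl
lemma sa2_2_0 : Fin.succAbove (2 : Fin 3) (0 : Fin 2) = (0 : Fin 3) := rfl
lemma sa2_2_1 : Fin.succAbove (2 : Fin 3) (1 : Fin 2) = (1 : Fin 3) := rfl
lemma sa3_0_0 : Fin.succAbove (0 : Fin 4) (0 : Fin 3) = (1 : Fin 4) := rfl
lemma sa3_0_1 : Fin.succAbove (0 : Fin 4) (1 : Fin 3) = (2 : Fin 4) := rfl
lemma sa3_0_2 : Fin.succAbove (0 : Fin 4) (2 : Fin 3) = (3 : Fin 4) := rfl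
lemma sa3_1_0 : Fin.succAbove (1 : Fin 4) (0 : Fin 3) = (0 : Fin 4) := rfl
lemma sa3_1_1 : Fin.succAbove (1 : Fin 4) (1 : Fin 3) = (2 : Fin 4) := rfl
lemma sa3_1_2 : Fin.succAbove (1 : Fin 4) (2 : Fin 3) = (3 : Fin 4) := rfl
lemma sa3_2_0 : Fin.succAbove (2 : Fin 4) (0 : Fin 3) = (0 : Fin 4) := rfl
lemma sa3_2_1 : Fin.succAbove (2 : Fin 4) (1 : Fin 3) = (1 : Fin 4) := rfl
lemma sa3_2_2 : Fin.succAbove (2 : Fin 4) (2 : Fin 3) = (3 : Fin 4) := rfl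
lemma sa3_3_0 : Fin.succAbove (3 : Fin 4) (0 : Fin 3) = (0 : Fin 4) := rfl
lemma sa3_3_1 : Fin.succAbove (3 : Fin 4) (1 : Fin 3) = (1 : Fin 4) := rfl
lemma sa3_3_2 : Fin.succAbove (3 : Fin 4) (2 : Fin 3) = (2 : Fin 4) := rfl
lemma sa4_0_0 : Fin.succAbove (0 : Fin 5) (0 : Fin 4) = (1 : Fin 5) := rfl
lemma sa4_0_1 : Fin.succAbove (0 : Fin 5) (1 : Fin 4) = (2 : Fin 5) := rfl
lemma sa4_0_2 : Fin.succAbove (0 : Fin 5) (2 : Fin 4) = (3 : Fin 5) := rfl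
lemma sa4_0_3 : Fin.succAbove (0 : Fin 5) (3 : Fin 4) = (4 : Fin 5) := rfl
lemma sa4_1_0 : Fin.succAbove (1 : Fin 5) (0 : Fin 4) = (0 : Fin 5) := rfl
lemma sa4_1_1 : Fin.succAbove (1 : Fin 5) (1 : Fin 4) = (2 : Fin 5) := rfl
lemma sa4_1_2 : Fin.succAbove (1 : Fin 5) (2 : Fin 4) = (3 : Fin 5) := rfl
lemma sa4_1_3 : Fin.succAbove (1 : Fin 5) (3 : Fin 4) = (4 : Fin 5) := rfl
lemma sa4_2_0 : Fin.succAbove (2 : Fin 5) (0 : Fin 4) = (0 : Fin 5) := rfl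
lemma sa4_2_1 : Fin.succAbove (2 : Fin 5) (1 : Fin 4) = (1 : Fin 5) := rfl
lemma sa4_2_2 : Fin.succAbove (2 : Fin 5) (2 : Fin 4) = (3 : Fin 5) := rfl
lemma sa4_2_3 : Fin.succAbove (2 : Fin 5) (3 : Fin 4) = (4 : Fin 5) := rfl
lemma sa4_3_0 : Fin.succAbove (3 : Fin 5) (0 : Fin 4) = (0 : Fin 5) := rfl
lemma sa4_3_1 : Fin.succAbove (3 : Fin 5) (1 : Fin 4) = (1 : Fin 5) := rfl
lemma sa4_3_2 : Fin.succAbove (3 : Fin 5) (2 : Fin 4) = (2 : Fin 5) := rfl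
lemma sa4_3_3 : Fin.succAbove (3 : Fin 5) (3 : Fin 4) = (4 : Fin 5) := rfl
lemma sa4_4_0 : Fin.succAbove (4 : Fin 5) (0 : Fin 4) = (0 : Fin 5) := rfl
lemma sa4_4_1 : Fin.succAbove (4 : Fin 5) (1 : Fin 4) = (1 : Fin 5) := rfl
lemma sa4_4_2 : Fin.succAbove (4 : Fin 5) (2 : Fin 4) = (2 : Fin 5) := rfl
lemma sa4_4_3 : Fin.succAbove (4 : Fin 5) (3 : Fin 4) = (3 : Fin 5) := rfl
lemma sa5_0_0 : Fin.succAbove (0 : Fin 6) (0 : Fin 5) = (1 : Fin 6) := rfl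
lemma sa5_0_1 : Fin.succAbove (0 : Fin 6) (1 : Fin 5) = (2 : Fin 6) := rfl
lemma sa5_0_2 : Fin.succAbove (0 : Fin 6) (2 : Fin 5) = (3 : Fin 6) := rfl
lemma sa5_0_3 : Fin.succAbove (0 : Fin 6) (3 : Fin 5) = (4 : Fin 6) := rfl
lemma sa5_0_4 : Fin.succAbove (0 : Fin 6) (4 : Fin 5) = (5 : Fin 6) := rfl
lemma sa5_1_0 : Fin.succAbove (1 : Fin 6) (0 : Fin 5) = (0 : Fin 6) := rfl
lemma sa5_1_1 : Fin.succAbove (1 : Fin 6) (1 : Fin 5) = (2 : Fin 6) := rfl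
lemma sa5_1_2 : Fin.succAbove (1 : Fin 6) (2 : Fin 5) = (3 : Fin 6) := rfl
lemma sa5_1_3 : Fin.succAbove (1 : Fin 6) (3 : Fin 5) = (4 : Fin 6) := rfl
lemma sa5_1_4 : Fin.succAbove (1 : Fin 6) (4 : Fin 5) = (5 : Fin 6) := rfl
lemma sa5_2_0 : Fin.succAbove (2 : Fin 6) (0 : Fin 5) = (0 : Fin 6) := rfl
lemma sa5_2_1 : Fin.succAbove (2 : Fin 6) (1 : Fin 5) = (1 : Fin 6) := rfl
lemma sa5_2_2 : Fin.succAbove (2 : Fin 6) (2 : Fin 5) = (3 : Fin 6) := rfl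
lemma sa5_2_3 : Fin.succAbove (2 : Fin 6) (3 : Fin 5) = (4 : Fin 6) := rfl
lemma sa5_2_4 : Fin.succAbove (2 : Fin 6) (4 : Fin 5) = (5 : Fin 6) := rfl
lemma sa5_3_0 : Fin.succAbove (3 : Fin 6) (0 : Fin 5) = (0 : Fin 6) := rfl
lemma sa5_3_1 : Fin.succAbove (3 : Fin 6) (1 : Fin 5) = (1 : Fin 6) := rfl
lemma sa5_3_2 : Fin.succAbove (3 : Fin 6) (2 : Fin 5) = (2 : Fin 6) := rfl
lemma sa5_3_3 : Fin.succAbove (3 : Fin 6) (3 : Fin 5) = (4 : Fin 6) := rfl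
lemma sa5_3_4 : Fin.succAbove (3 : Fin 6) (4 : Fin 5) = (5 : Fin 6) := rfl
lemma sa5_4_0 : Fin.succAbove (4 : Fin 6) (0 : Fin 5) = (0 : Fin 6) := rfl
lemma sa5_4_1 : Fin.succAbove (4 : Fin 6) (1 : Fin 5) = (1 : Fin 6) := rfl
lemma sa5_4_2 : Fin.succAbove (4 : Fin 6) (2 : Fin 5) = (2 : Fin 6) := rfl
lemma sa5_4_3 : Fin.succAbove (4 : Fin 6) (3 : Fin 5) = (3 : Fin 6) := rfl
lemma sa5_4_4 : Fin.succAbove (4 : Fin 6) (4 : Fin 5) = (5 : Fin 6) := rfl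
lemma sa5_5_0 : Fin.succAbove (5 : Fin 6) (0 : Fin 5) = (0 : Fin 6) := rfl
lemma sa5_5_1 : Fin.succAbove (5 : Fin 6) (1 : Fin 5) = (1 : Fin 6) := rfl
lemma sa5_5_2 : Fin.succAbove (5 : Fin 6) (2 : Fin 5) = (2 : Fin 6) := rfl
lemma sa5_5_3 : Fin.succAbove (5 : Fin 6) (3 : Fin 5) = (3 : Fin 6) := rfl
lemma sa5_5_4 : Fin.succAbove (5 : Fin 6) (4 : Fin 5) = (4 : Fin 6) := rfl

set_option maxRecDepth 100000 in
set_option maxHeartbeats 1000000000 in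
/-- characteristic polynomial of `Q₃(s,t)` for `s, t ≥ 1`, `n = s + t + 4`. -/
theorem stmt5 (s t n : ℕ) (hs : 1 ≤ s) (ht : 1 ≤ t) (hn : n = s + t + 4) (x : ℝ) :
    (x • (1 : Matrix (Fin 6) (Fin 6) ℝ) - Q3 s t).det =
      (x - 1) * (x + 1) *
        (x ^ 4 - ((n : ℝ) - 6) * x ^ 3 - (5 * (n : ℝ) - 16) * x ^ 2 +
          (8 * (s : ℝ) * (t : ℝ) - 7 * (s : ℝ) + 9 * (t : ℝ) - 10) * x +
          24 * (s : ℝ) * (t : ℝ) - 3 * (s : ℝ) + 13 * (t : ℝ) - 5) := by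
  subst hn
  have h : (x • (1 : Matrix (Fin 6) (Fin 6) ℝ) - Q3 s t) =
      !![x, 1, 1, 1, (s : ℝ), -(t : ℝ);
         1, x, 1, -1, -(s : ℝ), -(t : ℝ);
         1, 1, x, -1, -(s : ℝ), -(t : ℝ);
         1, -1, -1, x, -(s : ℝ), (t : ℝ);
         1, -1, -1, -1, x - ((s : ℝ) - 1), -(t : ℝ);
         -1, -1, -1, 1, -(s : ℝ), x - ((t : ℝ) - 1)] := by
    ext i j
    fin_cases i <;> fin_cases j <;>
      simp [Q3, Matrix.smul_apply, Matrix.one_apply, cv2, cv3, cv4, cv5] <;> first | rfl | ring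
  rw [h]
  simp only [Matrix.det_succ_row_zero, Fin.sum_univ_succ, Matrix.det_fin_zero,
    Matrix.submatrix_apply, Matrix.submatrix_submatrix, Function.comp,
    Matrix.cons_val', Matrix.cons_val_zero, Matrix.cons_val_one, Matrix.head_cons,
    Matrix.of_apply, Matrix.empty_val', Matrix.cons_val_fin_one, Matrix.head_fin_const,
    Fin.sum_univ_zero, cv2, cv3, cv4, cv5, fs1_0, fv1_0, fs2_0, fv2_0, fs2_1, fv2_1, fs3_0, fv3_0, fs3_1, fv3_1, fs3_2, fv3_2, fs4_0, fv4_0, fs4_1, fv4_1, fs4_2, fv4_2, fs4_3, fv4_3, fs5_0, fv5_0, fs5_1, fv5_1, fs5_2, fv5_2, fs5_3, fv5_3, fs5_4, fv5_4, fs6_0, fv6_0, fs6_1, fv6_1, fs6_2, fv6_2, fs6_3, fv6_3, fs6_4, fv6_4, fs6_5, fv6_5, sa1_0_0, sa1_1_0, sa2_0_0, sa2_0_1, sa2_1_0, sa2_1_1, sa2_2_0, sa2_2_1, sa3_0_0, sa3_0_1, sa3_0_2, sa3_1_0, sa3_1_1, sa3_1_2, sa3_2_0, sa3_2_1, sa3_2_2,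 sa3_3_0, sa3_3_1, sa3_3_2, sa4_0_0, sa4_0_1, sa4_0_2, sa4_0_3, sa4_1_0, sa4_1_1, sa4_1_2, sa4_1_3, sa4_2_0, sa4_2_1, sa4_2_2, sa4_2_3, sa4_3_0, sa4_3_1, sa4_3_2, sa4_3_3, sa4_4_0, sa4_4_1, sa4_4_2, sa4_4_3, sa5_0_0, sa5_0_1, sa5_0_2, sa5_0_3, sa5_0_4, sa5_1_0, sa5_1_1, sa5_1_2, sa5_1_3, sa5_1_4, sa5_2_0, sa5_2_1, sa5_2_2, sa5_2_3, sa5_2_4, sa5_3_0, sa5_3_1, sa5_3_2, sa5_3_3, sa5_3_4, sa5_4_0, sa5_4_1, sa5_4_2, sa5_4_3, sa5_4_4, sa5_5_0, sa5_5_1, sa5_5_2, sa5_5_3, sa5_5_4]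
  push_cast
  ring
end

section
/- For all integers s, t ≥ 1 with n = s + t + 4, the largest eigenvalue of the n×n matrix A(K_n,H_1(s,t)^−) equals the largest eigenvalue of the 6×6 matrix Q_3(s,t). -/
open Matrix

/-!
Partition the vertices of `H₁(s,t)` into the six cells `{v₁}, {v₂}, {v₃}, {v₄}`, the pendants
at `v₁` and the pendants at `v₄`. The sign between two vertices depends only on their cells, so
`A + I = P F Pᵀ` for the cell indicator matrix `P` and a symmetric `6 × 6` sign matrix `F`, while
`Q₃ + I = F D = (F Pᵀ) P` with `D = PᵀP` the diagonal of cell sizes. Since `XY` and `YX` have the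
same nonzero eigenvalues, `A` and `Q₃` have the same eigenvalues in `(-1, ∞)`. As `A` is symmetric
with zero trace it has an eigenvalue `≥ 0`, so both largest eigenvalues lie in `(-1, ∞)`.
-/
open Finset Polynomial

theorem Matrix.mem_spectrum_mul_comm {m n K : Type*} [Fintype m] [DecidableEq m] [Fintype n]
    [DecidableEq n] [Field K] (A : Matrix m n K) (B : Matrix n m K) {μ : K} (hμ : μ ≠ 0) :
    μ ∈ spectrum K (A * B) ↔ μ ∈ spectrum K (B * A) := by
  have h := congrArg (eval μ) (charpoly_mul_comm' A B)
  simp only [eval_mul, eval_pow, eval_X] at h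
  simp only [mem_spectrum_iff_isRoot_charpoly, IsRoot.def]
  constructor <;> intro h0
  · simpa [h0, hμ] using h
  · simpa [h0, hμ] using h.symm

theorem Matrix.mem_spectrum_submatrix_iff {ι κ K : Type*} [Fintype ι] [DecidableEq ι]
    [Fintype κ] [DecidableEq κ] [Field K] (F : Matrix κ κ K) (f : ι → κ) {μ : K} (hμ : μ ≠ 0) :
    μ ∈ spectrum K (F.submatrix f f) ↔
      μ ∈ spectrum K (F * diagonal fun k => (#{i | f i = k} : K)) := by
  let P : Matrix ι κ K := of fun i k => if f i = k then 1 else 0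
  have hA : F.submatrix f f = P * (F * Pᵀ) := by
    ext i j
    simp [P, mul_apply]
  have hQ : F * diagonal (fun k => (#{i | f i = k} : K)) = F * Pᵀ * P := by
    rw [Matrix.mul_assoc]
    congr 1
    ext k l
    by_cases hkl : k = l
    · subst hkl
      simp [P, mul_apply, ← ite_and]
    · simp only [P, mul_apply, diagonal_apply_ne _ hkl, transpose_apply, of_apply]
      refine (sum_eq_zero fun j _ => ?_).symm
      grind
  rw [hA, hQ]
  exact mem_spectrum_mul_comm _ _ hμ

theorem spectrum.mem_sub_one_iff {R A : Type*} [CommRing R] [Ring A] [Algebra R A] (a : A)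
    (μ : R) : μ ∈ spectrum R (a - 1) ↔ μ + 1 ∈ spectrum R a := by
  simp only [spectrum.mem_iff, map_add, map_one, sub_sub_eq_add_sub, add_sub_right_comm]

theorem Matrix.IsHermitian.exists_nonneg_eigenvalue_of_trace_eq_zero {n : Type*} [Fintype n]
    [DecidableEq n] [Nonempty n] {A : Matrix n n ℝ} (hA : A.IsHermitian) (htr : A.trace = 0) :
    ∃ μ ∈ spectrum ℝ A, 0 ≤ μ := by
  obtain ⟨i, -, hi⟩ := exists_le_of_sum_le univ_nonempty (f := 0) (g := hA.eigenvalues)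
    (by simpa [htr] using hA.trace_eq_sum_eigenvalues.le)
  exact ⟨_, hA.eigenvalues_mem_spectrum_real i, hi⟩

theorem Set.Finite.csSup_eq_of_mem_iff {α : Type*} [ConditionallyCompleteLinearOrder α]
    {S T : Set α} (hS : S.Finite) (hT : T.Finite) {c x : α} (hx : x ∈ S) (hcx : c < x)
    (hST : ∀ μ, c < μ → (μ ∈ S ↔ μ ∈ T)) : sSup S = sSup T := by
  have key : ∀ {S T : Set α}, S.Finite → T.Finite → x ∈ S → (∀ μ, c < μ → (μ ∈ S ↔ μ ∈ T)) →
      sSup S ≤ sSup T := fun hS hT hx hST =>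
    le_csSup hT.bddAbove <| (hST _ (hcx.trans_le (le_csSup hS.bddAbove hx))).1
      (Set.Nonempty.csSup_mem ⟨x, hx⟩ hS)
  exact (key hS hT hx hST).antisymm
    (key hT hS ((hST x hcx).1 hx) fun μ hμ => (hST μ hμ).symm)

theorem Fin.card_filter_val (n : ℕ) (p : ℕ → Prop) [DecidablePred p] :
    #{i : Fin n | p i} = #{v ∈ range n | p v} := by
  refine card_bij (fun i _ => i.val) (by simp) (fun _ _ _ _ => Fin.ext) ?_
  simp only [mem_filter, mem_range, mem_univ, true_and]
  exact fun v ⟨hv, hp⟩ => ⟨⟨v, hv⟩, hp, rfl⟩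

theorem Finset.card_filter_range_of_iff_mem_Ico {n a b : ℕ} (p : ℕ → Prop) [DecidablePred p]
    (hb : b ≤ n) (hp : ∀ v < n, p v ↔ a ≤ v ∧ v < b) : #{v ∈ range n | p v} = b - a := by
  rw [← Nat.card_Ico]
  congr 1
  ext v
  simp only [mem_filter, mem_range, mem_Ico]
  constructor
  · exact fun ⟨hv, h⟩ => (hp v hv).1 h
  · exact fun h => ⟨by omega, (hp v (by omega)).2 h⟩

-- Cells of `H₁(s,t)` in the 0-based indexing of `signMat`: `v₁, v₂, v₃, v₄` are `0, 1, 2, 3`,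
-- the pendants at `v₁` are `4, …, s + 3`, the pendants at `v₄` are `s + 4, …`.
def h1Cell (s v : ℕ) : Fin 6 :=
  if h : v < 4 then ⟨v, by omega⟩ else if v < s + 4 then 4 else 5

theorem h1Cell_cases (s v : ℕ) :
    (v = 0 ∧ h1Cell s v = 0) ∨ (v = 1 ∧ h1Cell s v = 1) ∨ (v = 2 ∧ h1Cell s v = 2) ∨
      (v = 3 ∧ h1Cell s v = 3) ∨ (4 ≤ v ∧ v < s + 4 ∧ h1Cell s v = 4) ∨
      (s + 4 ≤ v ∧ h1Cell s v = 5) := by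
  unfold h1Cell
  split_ifs
  · interval_cases v <;> simp
  · omega
  · omega

noncomputable def h1CellSign : Matrix (Fin 6) (Fin 6) ℝ :=
  !![1, -1, -1, -1, -1, 1;
     -1, 1, -1, 1, 1, 1;
     -1, -1, 1, 1, 1, 1;
     -1, 1, 1, 1, 1, -1;
     -1, 1, 1, 1, 1, 1;
     1, 1, 1, -1, 1, 1]

theorem h1CellSign_isSymm : h1CellSign.IsSymm := by
  ext i j
  fin_cases i <;> fin_cases j <;> rfl

theorem h1CellSign_apply_self (k : Fin 6) : h1CellSign k k = 1 := by
  fin_cases k <;> rfl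

theorem signMat_H1edge_eq_submatrix_sub_one (s t : ℕ) :
    signMat (s + t + 4) (H1edge s t) =
      h1CellSign.submatrix (fun i : Fin (s + t + 4) => h1Cell s i)
        (fun j : Fin (s + t + 4) => h1Cell s j) - 1 := by
  ext i j
  simp only [signMat, of_apply, Matrix.sub_apply, submatrix_apply, one_apply]
  by_cases hij : i = j
  · simp [hij, h1CellSign_apply_self]
  have hij' : (i : ℕ) ≠ j := Fin.val_ne_of_ne hij
  rw [if_neg hij, if_neg hij, sub_zero]
  rcases h1Cell_cases s i with ⟨hi, hci⟩ | ⟨hi, hci⟩ | ⟨hi, hci⟩ | ⟨hi, hci⟩ | ⟨hi, hi', hci⟩ |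
      ⟨hi, hci⟩ <;>
    rcases h1Cell_cases s j with ⟨hj, hcj⟩ | ⟨hj, hcj⟩ | ⟨hj, hcj⟩ | ⟨hj, hcj⟩ | ⟨hj, hj', hcj⟩ |
      ⟨hj, hcj⟩ <;>
    rw [hci, hcj] <;>
    split_ifs with hE <;> simp [h1CellSign] <;>
    simp only [H1edge, adjPair] at hE <;> omega

theorem card_h1Cell (s t : ℕ) (k : Fin 6) :
    #{i : Fin (s + t + 4) | h1Cell s i = k} = ![1, 1, 1, 1, s, t] k := by
  rw [Fin.card_filter_val (p := fun v => h1Cell s v = k)]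
  refine (card_filter_range_of_iff_mem_Ico _ (a := ![0, 1, 2, 3, 4, s + 4] k)
    (b := ![1, 2, 3, 4, s + 4, s + t + 4] k) ?_ fun v hv => ?_).trans ?_
  · fin_cases k <;> simp
  · rcases h1Cell_cases s v with ⟨hv', hc⟩ | ⟨hv', hc⟩ | ⟨hv', hc⟩ | ⟨hv', hc⟩ |
      ⟨hv', hv'', hc⟩ | ⟨hv', hc⟩ <;> rw [hc] <;> fin_cases k <;> simp <;> omega
  · fin_cases k <;> simp

theorem Q3_eq_mul_diagonal_card_sub_one (s t : ℕ) :
    Q3 s t =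
      h1CellSign * diagonal (fun k => (#{i : Fin (s + t + 4) | h1Cell s i = k} : ℝ)) - 1 := by
  ext i j
  rw [Matrix.sub_apply, mul_diagonal, one_apply, card_h1Cell]
  fin_cases i <;> fin_cases j <;> simp [Q3, h1CellSign]

theorem trace_signMat (n : ℕ) (E : ℕ → ℕ → Prop) : (signMat n E).trace = 0 := by
  simp [Matrix.trace, signMat]

theorem signMat_H1edge_isHermitian (s t : ℕ) :
    (signMat (s + t + 4) (H1edge s t)).IsHermitian := by
  rw [isHermitian_iff_isSymm, signMat_H1edge_eq_submatrix_sub_one]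
  exact (h1CellSign_isSymm.submatrix _).sub isSymm_one

theorem stmt6_general (s t n : ℕ) (hn : n = s + t + 4) :
    lam1 (signMat n (H1edge s t)) = lam1 (Q3 s t) := by
  subst hn
  have hspec : ∀ μ : ℝ, -1 < μ →
      (μ ∈ spectrum ℝ (signMat (s + t + 4) (H1edge s t)) ↔ μ ∈ spectrum ℝ (Q3 s t)) := by
    intro μ hμ
    rw [signMat_H1edge_eq_submatrix_sub_one, Q3_eq_mul_diagonal_card_sub_one,
      spectrum.mem_sub_one_iff, spectrum.mem_sub_one_iff]
    exact mem_spectrum_submatrix_iff _ _ (by linarith)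
  obtain ⟨μ, hμ, hμ0⟩ :=
    (signMat_H1edge_isHermitian s t).exists_nonneg_eigenvalue_of_trace_eq_zero (trace_signMat _ _)
  exact (finite_spectrum _).csSup_eq_of_mem_iff (finite_spectrum _) hμ (by linarith) hspec

/-- for `s, t ≥ 1` and `n = s + t + 4`,
`λ₁(A(K_n,H₁(s,t)⁻)) = λ₁(Q₃(s,t))`. -/
theorem stmt6 (s t n : ℕ) (hs : 1 ≤ s) (ht : 1 ≤ t) (hn : n = s + t + 4) :
    lam1 (signMat n (H1edge s t)) = lam1 (Q3 s t) :=
  stmt6_general s t n hn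
end

section
/- For every integer n ≥ 9, λ1(A(K_n,U_2^−)) > λ1(A(K_n,H_1(n−5,1)^−)). -/
open Matrix

section Aux
open Finset

lemma mem_spectrum_of_mulVec {n : ℕ} {M : Matrix (Fin n) (Fin n) ℝ} {μ : ℝ} {v : Fin n → ℝ}
    (hv : v ≠ 0) (h : M.mulVec v = μ • v) : μ ∈ spectrum ℝ M := by
  rw [spectrum.mem_iff]
  intro hu
  rw [Matrix.isUnit_iff_isUnit_det, isUnit_iff_ne_zero] at hu
  apply hu
  rw [← Matrix.exists_mulVec_eq_zero_iff]
  refine ⟨v, hv, ?_⟩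
  rw [Matrix.sub_mulVec, Algebra.algebraMap_eq_smul_one, Matrix.smul_mulVec,
    Matrix.one_mulVec, h, sub_self]

lemma exists_eigvec_of_mem_spectrum {n : ℕ} {M : Matrix (Fin n) (Fin n) ℝ} {μ : ℝ}
    (h : μ ∈ spectrum ℝ M) : ∃ v : Fin n → ℝ, v ≠ 0 ∧ M.mulVec v = μ • v := by
  rw [spectrum.mem_iff] at h
  rw [Matrix.isUnit_iff_isUnit_det, isUnit_iff_ne_zero, not_not,
    ← Matrix.exists_mulVec_eq_zero_iff] at h
  obtain ⟨v, hv, hveq⟩ := h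
  refine ⟨v, hv, ?_⟩
  rw [Matrix.sub_mulVec, Algebra.algebraMap_eq_smul_one, Matrix.smul_mulVec,
    Matrix.one_mulVec, sub_eq_zero] at hveq
  exact hveq.symm

lemma bddAbove_spectrum {n : ℕ} (M : Matrix (Fin n) (Fin n) ℝ) : BddAbove (spectrum ℝ M) :=
  (Matrix.finite_spectrum M).bddAbove

open scoped Classical in
lemma row_eval {n : ℕ} (E : ℕ → ℕ → Prop) (v : Fin n → ℝ) (i : Fin n) (P : Fin n → Prop)
    [DecidablePred P]
    (hP : ∀ j : Fin n, E (i.val + 1) (j.val + 1) ↔ P j) (hPi : ¬ P i) :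
    (signMat n E).mulVec v i
      = (∑ j : Fin n, v j) - v i - 2 * ∑ j ∈ univ.filter P, v j := by
  unfold Matrix.mulVec dotProduct
  have hrw : ∀ j : Fin n, signMat n E i j * v j
      = v j - (if j = i then v j else 0) - 2 * (if P j then v j else 0) := by
    intro j
    simp only [signMat, Matrix.of_apply]
    by_cases hij : i = j
    · subst hij; simp [hPi]
    · have : ¬ j = i := fun h => hij h.symm
      rw [if_neg hij, if_neg this]
      by_cases hp : P j
      · rw [if_pos ((hP j).mpr hp), if_pos hp]; ring
      · rw [if_neg (fun h => hp ((hP j).mp h)), if_neg hp]; ring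
  rw [Finset.sum_congr rfl (fun j _ => hrw j)]
  rw [Finset.sum_sub_distrib, Finset.sum_sub_distrib, Finset.sum_ite_eq' Finset.univ i v,
    if_pos (Finset.mem_univ i), ← Finset.mul_sum, ← Finset.sum_filter]

lemma filter_val_eq {n c : ℕ} (hc : c < n) (v : Fin n → ℝ) :
    ∑ j ∈ univ.filter (fun j : Fin n => j.val = c), v j = v ⟨c, hc⟩ := by
  rw [show univ.filter (fun j : Fin n => j.val = c) = {⟨c, hc⟩} by
    ext j; simp [Fin.ext_iff]]
  simp

lemma filter_interval_sum {n a b : ℕ} (hb : b < n) (v : Fin n → ℝ) (p : ℝ)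
    (hv : ∀ j : Fin n, a ≤ j.val → j.val ≤ b → v j = p) :
    ∑ j ∈ univ.filter (fun j : Fin n => a ≤ j.val ∧ j.val ≤ b), v j = (b + 1 - a : ℕ) * p := by
  have hcongr : ∑ j ∈ univ.filter (fun j : Fin n => a ≤ j.val ∧ j.val ≤ b), v j
      = ∑ _j ∈ univ.filter (fun j : Fin n => a ≤ j.val ∧ j.val ≤ b), p :=
    Finset.sum_congr rfl fun j hj =>
      hv j (Finset.mem_filter.mp hj).2.1 (Finset.mem_filter.mp hj).2.2
  rw [hcongr, Finset.sum_const, nsmul_eq_mul]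
  congr 1
  norm_cast
  have h1 : (univ.filter (fun j : Fin n => a ≤ j.val ∧ j.val ≤ b)).card
      = ((Finset.range n).filter (fun k => a ≤ k ∧ k ≤ b)).card := by
    rw [Finset.card_filter, Finset.card_filter,
      ← Fin.sum_univ_eq_sum_range (fun k => if a ≤ k ∧ k ≤ b then 1 else 0)]
  rw [h1, show (Finset.range n).filter (fun k => a ≤ k ∧ k ≤ b) = Finset.Icc a b by
    ext k; simp only [Finset.mem_filter, Finset.mem_range, Finset.mem_Icc]; omega,
    Nat.card_Icc]

lemma sum_filter_split {n : ℕ} (v : Fin n → ℝ) (P Q R : Fin n → Prop)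
    [DecidablePred P] [DecidablePred Q] [DecidablePred R]
    (h : ∀ j : Fin n, P j ↔ (Q j ∨ R j)) (hd : ∀ j : Fin n, ¬(Q j ∧ R j)) :
    ∑ j ∈ univ.filter P, v j
      = ∑ j ∈ univ.filter Q, v j + ∑ j ∈ univ.filter R, v j := by
  rw [show univ.filter P = univ.filter Q ∪ univ.filter R by
    ext j
    simp only [Finset.mem_union, Finset.mem_filter, Finset.mem_univ, true_and]
    exact h j]
  exact Finset.sum_union (by
    rw [Finset.disjoint_left]
    intro j hj1 hj2
    rw [Finset.mem_filter] at hj1 hj2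
    exact hd j ⟨hj1.2, hj2.2⟩)

lemma cubic_neg {x : ℝ} (hx : 9 ≤ x) :
    (x-1-10/x)^3 - (x-5)*(x-1-10/x)^2 - (4*(x-5)+5)*(x-1-10/x) - (3*(x-5)+4) < 0 := by
  have hx0 : x ≠ 0 := by linarith
  have hx3 : 0 < x^3 := by positivity
  have key : x^3 * ((x-1-10/x)^3 - (x-5)*(x-1-10/x)^2 - (4*(x-5)+5)*(x-1-10/x) - (3*(x-5)+4))
      = -(2*(x-9)^4 + 92*(x-9)^3 + 1392*(x-9)^2 + 8332*(x-9) + 17182) := by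
    field_simp
    ring
  nlinarith [pow_nonneg (show (0:ℝ) ≤ x - 9 by linarith) 4,
    pow_nonneg (show (0:ℝ) ≤ x - 9 by linarith) 3, sq_nonneg (x-9),
    mul_pos hx3 (show (0:ℝ) < 1 by norm_num)]
set_option maxHeartbeats 2000000 in
lemma quintic_pos {x u : ℝ} (hx : 9 ≤ x) (hu : 0 ≤ u) :
    0 < (x-1-10/x+u)^5 + 2*(x-1-10/x+u)^4 - 8*(x-1-10/x+u)^3 - 10*(x-1-10/x+u)^2
      + 7*(x-1-10/x+u) + 8
      - (x-5)*((x-1-10/x+u)^4 + 6*(x-1-10/x+u)^3 + 4*(x-1-10/x+u)^2 - 22*(x-1-10/x+u) - 21) := by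
  have hx0 : x ≠ 0 := by linarith
  have hx5 : 0 < x^5 := by positivity
  have ht : (0:ℝ) ≤ x - 9 := by linarith
  have key : x^5 * ((x-1-10/x+u)^5 + 2*(x-1-10/x+u)^4 - 8*(x-1-10/x+u)^3 - 10*(x-1-10/x+u)^2
      + 7*(x-1-10/x+u) + 8
      - (x-5)*((x-1-10/x+u)^4 + 6*(x-1-10/x+u)^3 + 4*(x-1-10/x+u)^2 - 22*(x-1-10/x+u) - 21))
      = (2*(x-9)^8+116*(x-9)^7+2812*(x-9)^6+37100*(x-9)^5+290920*(x-9)^4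
          +1388508*(x-9)^3+3937284*(x-9)^2+6013028*(x-9)+3630230)
        + ((x-9)^9+83*(x-9)^8+3008*(x-9)^7+62344*(x-9)^6+812994*(x-9)^5+6908934*(x-9)^4
          +38233832*(x-9)^3+132830272*(x-9)^2+262911461*(x-9)+225937071)*u
        + (4*(x-9)^8+294*(x-9)^7+9290*(x-9)^6+164658*(x-9)^5+1788870*(x-9)^4
          +12190026*(x-9)^3+50858486*(x-9)^2+118756350*(x-9)+118832022)*u^2
        + (6*(x-9)^7+384*(x-9)^6+10374*(x-9)^5+153280*(x-9)^4+1337050*(x-9)^3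
          +6881544*(x-9)^2+19338426*(x-9)+22878936)*u^3
        + (4*(x-9)^6+218*(x-9)^5+4900*(x-9)^4+58140*(x-9)^3+383940*(x-9)^2
          +1336986*(x-9)+1915812)*u^4
        + ((x-9)^5+45*(x-9)^4+810*(x-9)^3+7290*(x-9)^2+32805*(x-9)+59049)*u^5 := by
    field_simp
    ring
  have hpos : 0 < (2*(x-9)^8+116*(x-9)^7+2812*(x-9)^6+37100*(x-9)^5+290920*(x-9)^4
          +1388508*(x-9)^3+3937284*(x-9)^2+6013028*(x-9)+3630230)
        + ((x-9)^9+83*(x-9)^8+3008*(x-9)^7+62344*(x-9)^6+812994*(x-9)^5+6908934*(x-9)^4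
          +38233832*(x-9)^3+132830272*(x-9)^2+262911461*(x-9)+225937071)*u
        + (4*(x-9)^8+294*(x-9)^7+9290*(x-9)^6+164658*(x-9)^5+1788870*(x-9)^4
          +12190026*(x-9)^3+50858486*(x-9)^2+118756350*(x-9)+118832022)*u^2
        + (6*(x-9)^7+384*(x-9)^6+10374*(x-9)^5+153280*(x-9)^4+1337050*(x-9)^3
          +6881544*(x-9)^2+19338426*(x-9)+22878936)*u^3
        + (4*(x-9)^6+218*(x-9)^5+4900*(x-9)^4+58140*(x-9)^3+383940*(x-9)^2
          +1336986*(x-9)+1915812)*u^4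
        + ((x-9)^5+45*(x-9)^4+810*(x-9)^3+7290*(x-9)^2+32805*(x-9)+59049)*u^5 := by
    set t := x - 9 with htdef
    positivity
  by_contra hle
  push_neg at hle
  nlinarith [mul_nonneg hx5.le (neg_nonneg.mpr hle)]

open scoped Classical in
lemma U2_exists_big_eigen (n : ℕ) (hn : 9 ≤ n) :
    ∃ lam : ℝ, lam ∈ spectrum ℝ (signMat n U2edge) ∧ (n:ℝ) - 1 - 10/(n:ℝ) < lam := by
  have hn9 : (9:ℝ) ≤ (n:ℝ) := by exact_mod_cast hn
  have hnpos : (0:ℝ) < n := by linarith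
  set c : ℝ := (n:ℝ) - 1 - 10/(n:ℝ) with hc
  set m : ℝ := (n:ℝ) - 5 with hm
  set f : ℝ → ℝ := fun x => x^3 - m*x^2 - (4*m+5)*x - (3*m+4) with hf
  have hcge : (62:ℝ)/9 ≤ c := by
    rw [hc]
    have : 10/(n:ℝ) ≤ 10/9 := by
      apply div_le_div_of_nonneg_left (by norm_num) (by norm_num) hn9
    linarith
  have hfc : f c < 0 := by
    have := cubic_neg hn9
    rw [hf, hc, hm]
    convert this using 2 <;> ring
  have hfn : 0 < f (n:ℝ) := by
    have : f (n:ℝ) = (n:ℝ)^2 + 12*(n:ℝ) + 11 := by rw [hf, hm]; ring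
    rw [this]; nlinarith
  have hcn : c < (n:ℝ) := by
    rw [hc]
    have : 0 < 10/(n:ℝ) := by positivity
    linarith
  have hcont : ContinuousOn f (Set.Icc c (n:ℝ)) := by
    apply Continuous.continuousOn; rw [hf]; continuity
  have hmem : (0:ℝ) ∈ Set.Ioo (f c) (f (n:ℝ)) := ⟨hfc, hfn⟩
  obtain ⟨lam, hlam_mem, hflam0⟩ := intermediate_value_Ioo hcn.le hcont hmem
  obtain ⟨hlamc, hlamn⟩ := hlam_mem
  have hflam : lam^3 - m*lam^2 - (4*m+5)*lam - (3*m+4) = 0 := hflam0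
  refine ⟨lam, ?_, hlamc⟩
  have hlam6 : (62:ℝ)/9 < lam := lt_of_le_of_lt hcge hlamc
  have hlam3 : lam + 3 ≠ 0 := by linarith
  set b : ℝ := (lam+1)/(lam+3) with hbdef
  have hb : b * (lam+3) = lam+1 := by rw [hbdef]; field_simp
  set a : ℝ := (1-lam)*b + m with hadef
  have e2 : lam * b = -a + b + m := by rw [hadef]; ring
  have e3 : lam * 1 = -a + 4*b + m - 1 := by rw [hadef]; linear_combination -hb
  have e1 : lam * a = -(4*b + m) := by
    have e1' : (lam * a + (4*b + m)) * (lam+3) = 0 := by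
      rw [hadef]; linear_combination (lam*(1-lam)+4)*hb - hflam
    rcases mul_eq_zero.mp e1' with h | h
    · linarith
    · exact absurd h hlam3
  set v : Fin n → ℝ := fun j => if j.val = 0 then a else if j.val ≤ 4 then b else 1 with hvdef
  have hv5 : v ⟨5, by omega⟩ = 1 := by simp [hvdef]
  have hvne : v ≠ 0 := by
    intro h0
    have := congrFun h0 ⟨5, by omega⟩
    rw [hv5] at this
    exact one_ne_zero this
  have hv0 : v ⟨0, by omega⟩ = a := by simp [hvdef]
  have hvb : ∀ j : Fin n, 1 ≤ j.val → j.val ≤ 4 → v j = b := by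
    intro j h1 h2
    simp only [hvdef]
    rw [if_neg (by omega), if_pos h2]
  have hvone : ∀ j : Fin n, 5 ≤ j.val → j.val ≤ n-1 → v j = 1 := by
    intro j h1 _
    simp only [hvdef]
    rw [if_neg (by omega), if_neg (by omega)]
  have hsum0 : ∑ j ∈ univ.filter (fun j : Fin n => j.val = 0), v j = a := by
    rw [filter_val_eq (show 0 < n by omega) v, hv0]
  have hsum14 : ∑ j ∈ univ.filter (fun j : Fin n => 1 ≤ j.val ∧ j.val ≤ 4), v j = 4*b := by
    rw [filter_interval_sum (show 4 < n by omega) v b hvb]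
    norm_num
  have hsum5 : ∑ j ∈ univ.filter (fun j : Fin n => 5 ≤ j.val ∧ j.val ≤ n-1), v j = m := by
    rw [filter_interval_sum (show n-1 < n by omega) v 1 hvone, hm]
    rw [show (n - 1 + 1 - 5 : ℕ) = n - 5 by omega]
    rw [Nat.cast_sub (show 5 ≤ n by omega)]
    push_cast
    ring
  have hsum1n : ∑ j ∈ univ.filter (fun j : Fin n => 1 ≤ j.val ∧ j.val ≤ n-1), v j
      = 4*b + m := by
    rw [sum_filter_split v (fun j : Fin n => 1 ≤ j.val ∧ j.val ≤ n-1)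
      (fun j : Fin n => 1 ≤ j.val ∧ j.val ≤ 4) (fun j : Fin n => 5 ≤ j.val ∧ j.val ≤ n-1)
      (fun j => by have := j.isLt; constructor <;> (intro h; omega))
      (fun j => by omega), hsum14, hsum5]
  have hS : ∑ j : Fin n, v j = a + 4*b + m := by
    rw [show (Finset.univ : Finset (Fin n))
        = univ.filter (fun j : Fin n => j.val = 0 ∨ (1 ≤ j.val ∧ j.val ≤ n-1)) from
      (Finset.filter_true_of_mem (fun j _ => by have := j.isLt; omega)).symm]
    rw [sum_filter_split v (fun j : Fin n => j.val = 0 ∨ (1 ≤ j.val ∧ j.val ≤ n-1))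
      (fun j : Fin n => j.val = 0) (fun j : Fin n => 1 ≤ j.val ∧ j.val ≤ n-1)
      (fun j => Iff.rfl) (fun j => by omega), hsum0, hsum1n]
    ring
  apply mem_spectrum_of_mulVec hvne
  funext i
  simp only [Pi.smul_apply, smul_eq_mul]
  have hiv : i.val = 0 ∨ (1 ≤ i.val ∧ i.val ≤ 4) ∨ (5 ≤ i.val) := by omega
  rcases hiv with hi | hi | hi
  · have hrow := row_eval U2edge v i (fun j : Fin n => 1 ≤ j.val ∧ j.val ≤ n-1)
      (fun j => by have := j.isLt; rw [hi]; simp only [U2edge, adjPair, true_and, and_true, false_and, and_false, false_or, or_false, iff_true, true_iff]; omega)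
      (by omega)
    rw [hrow, hS, hsum1n, show i = ⟨0, by omega⟩ from Fin.ext hi, hv0]
    linarith [e1]
  · have hvi : v i = b := hvb i hi.1 hi.2
    obtain ⟨pt, hptn, hpt1, hpt4, hiff, hni⟩ :
        ∃ pt : ℕ, pt < n ∧ 1 ≤ pt ∧ pt ≤ 4 ∧
        (∀ j : Fin n, U2edge (i.val+1) (j.val+1) ↔ (j.val = 0 ∨ j.val = pt)) ∧
        ¬ (i.val = 0 ∨ i.val = pt) := by
      have h4 : i.val = 1 ∨ i.val = 2 ∨ i.val = 3 ∨ i.val = 4 := by omega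
      rcases h4 with h | h | h | h
      · refine ⟨2, by omega, by omega, by omega, ?_, by omega⟩
        intro j; have := j.isLt; rw [h]; simp only [U2edge, adjPair, true_and, and_true, false_and, and_false, false_or, or_false, iff_true, true_iff]; omega
      · refine ⟨1, by omega, by omega, by omega, ?_, by omega⟩
        intro j; have := j.isLt; rw [h]; simp only [U2edge, adjPair, true_and, and_true, false_and, and_false, false_or, or_false, iff_true, true_iff]; omega
      · refine ⟨4, by omega, by omega, by omega, ?_, by omega⟩
        intro j; have := j.isLt; rw [h]; simp only [U2edge, adjPair, true_and, and_true, false_and, and_false, false_or, or_false, iff_true, true_iff]; omega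
      · refine ⟨3, by omega, by omega, by omega, ?_, by omega⟩
        intro j; have := j.isLt; rw [h]; simp only [U2edge, adjPair, true_and, and_true, false_and, and_false, false_or, or_false, iff_true, true_iff]; omega
    have hrow := row_eval U2edge v i (fun j : Fin n => j.val = 0 ∨ j.val = pt) hiff hni
    have hsplit : ∑ j ∈ univ.filter (fun j : Fin n => j.val = 0 ∨ j.val = pt), v j
        = a + b := by
      rw [sum_filter_split v (fun j : Fin n => j.val = 0 ∨ j.val = pt)
        (fun j : Fin n => j.val = 0) (fun j : Fin n => j.val = pt)
        (fun j => Iff.rfl) (fun j => by omega), hsum0,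
        filter_val_eq hptn v, hvb ⟨pt, hptn⟩ hpt1 hpt4]
    rw [hrow, hS, hsplit, hvi]
    linarith [e2]
  · have hvi : v i = 1 := hvone i hi (by have := i.isLt; omega)
    have hrow := row_eval U2edge v i (fun j : Fin n => j.val = 0)
      (fun j => by have := j.isLt; have := i.isLt; simp only [U2edge, adjPair, true_and, and_true, false_and, and_false, false_or, or_false, iff_true, true_iff]; omega)
      (by omega)
    rw [hrow, hS, hsum0, hvi]
    linarith [e3]

open scoped Classical in
set_option maxHeartbeats 2000000 in
lemma H1_spec_le (n : ℕ) (hn : 9 ≤ n) :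
    ∀ μ ∈ spectrum ℝ (signMat n (H1edge (n-5) 1)), μ ≤ (n:ℝ) - 1 - 10/(n:ℝ) := by
  intro μ hμsp
  by_contra hgt
  push_neg at hgt
  have hn9 : (9:ℝ) ≤ (n:ℝ) := by exact_mod_cast hn
  have hc6 : (6:ℝ) < (n:ℝ)-1-10/(n:ℝ) := by
    have h10 : 10/(n:ℝ) ≤ 10/9 :=
      div_le_div_of_nonneg_left (by norm_num) (by norm_num) hn9
    linarith
  have hμ6 : (6:ℝ) < μ := lt_trans hc6 hgt
  have hμ1 : μ - 1 ≠ 0 := by linarith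
  have hμp1 : μ + 1 ≠ 0 := by linarith
  obtain ⟨v, hvne, hMv⟩ := exists_eigvec_of_mem_spectrum hμsp
  have hrowf : ∀ i : Fin n, (signMat n (H1edge (n-5) 1)).mulVec v i = μ * v i := by
    intro i
    rw [hMv]
    simp
  have hlt0 : 0 < n := by omega
  have hlt1 : 1 < n := by omega
  have hlt2 : 2 < n := by omega
  have hlt3 : 3 < n := by omega
  have hlt4 : 4 < n := by omega
  have hltN : n-1 < n := by omega
  -- pendant rows
  have hpend : ∀ i : Fin n, 4 ≤ i.val → i.val ≤ n-2 →
      (μ+1) * v i = (∑ j : Fin n, v j) - 2 * v ⟨0, hlt0⟩ := by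
    intro i hi4 hin
    have hrow := row_eval (H1edge (n-5) 1) v i (fun j : Fin n => j.val = 0)
      (fun j => by
        have := j.isLt
        simp only [H1edge, adjPair, true_and, and_true, false_and, and_false, false_or,
          or_false, iff_true, true_iff]
        omega)
      (by omega)
    rw [filter_val_eq hlt0 v] at hrow
    have hf := hrowf i
    rw [hrow] at hf
    linarith
  have hpconst : ∀ i : Fin n, 4 ≤ i.val → i.val ≤ n-2 → v i = v ⟨4, hlt4⟩ := by
    intro i hi4 hin
    have e1 := hpend i hi4 hin
    have e2 := hpend ⟨4, hlt4⟩ (le_refl 4) (show (4:ℕ) ≤ n-2 by omega)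
    exact mul_left_cancel₀ hμp1 (e1.trans e2.symm)
  -- rows 1 and 2
  have hrow1 : μ * v ⟨1, hlt1⟩ = (∑ j : Fin n, v j) - v ⟨1, hlt1⟩
      - 2 * (v ⟨0, hlt0⟩ + v ⟨2, hlt2⟩) := by
    have hrow := row_eval (H1edge (n-5) 1) v ⟨1, hlt1⟩
      (fun j : Fin n => j.val = 0 ∨ j.val = 2)
      (fun j => by
        have := j.isLt
        show H1edge (n-5) 1 (1+1) (j.val+1) ↔ _
        simp only [H1edge, adjPair, true_and, and_true, false_and, and_false, false_or,
          or_false, iff_true, true_iff]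
        omega)
      (show ¬((1:ℕ) = 0 ∨ (1:ℕ) = 2) by omega)
    rw [sum_filter_split v (fun j : Fin n => j.val = 0 ∨ j.val = 2)
      (fun j : Fin n => j.val = 0) (fun j : Fin n => j.val = 2)
      (fun j => Iff.rfl) (fun j => by omega), filter_val_eq hlt0 v,
      filter_val_eq hlt2 v] at hrow
    rw [← hrowf ⟨1, hlt1⟩, hrow]
  have hrow2 : μ * v ⟨2, hlt2⟩ = (∑ j : Fin n, v j) - v ⟨2, hlt2⟩
      - 2 * (v ⟨0, hlt0⟩ + v ⟨1, hlt1⟩) := by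
    have hrow := row_eval (H1edge (n-5) 1) v ⟨2, hlt2⟩
      (fun j : Fin n => j.val = 0 ∨ j.val = 1)
      (fun j => by
        have := j.isLt
        show H1edge (n-5) 1 (2+1) (j.val+1) ↔ _
        simp only [H1edge, adjPair, true_and, and_true, false_and, and_false, false_or,
          or_false, iff_true, true_iff]
        omega)
      (show ¬((2:ℕ) = 0 ∨ (2:ℕ) = 1) by omega)
    rw [sum_filter_split v (fun j : Fin n => j.val = 0 ∨ j.val = 1)
      (fun j : Fin n => j.val = 0) (fun j : Fin n => j.val = 1)
      (fun j => Iff.rfl) (fun j => by omega), filter_val_eq hlt0 v,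
      filter_val_eq hlt1 v] at hrow
    rw [← hrowf ⟨2, hlt2⟩, hrow]
  have hb2 : v ⟨2, hlt2⟩ = v ⟨1, hlt1⟩ := by
    have hd : (μ - 1) * (v ⟨2, hlt2⟩ - v ⟨1, hlt1⟩) = 0 := by ring_nf; linarith [hrow1, hrow2]
    rcases mul_eq_zero.mp hd with h | h
    · exact absurd h hμ1
    · linarith
  -- interval sum
  have hsum4 : ∑ j ∈ univ.filter (fun j : Fin n => 4 ≤ j.val ∧ j.val ≤ n-2), v j
      = ((n:ℝ)-5) * v ⟨4, hlt4⟩ := by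
    rw [filter_interval_sum (show n-2 < n by omega) v (v ⟨4, hlt4⟩) hpconst]
    rw [show (n-2+1-4 : ℕ) = n - 5 by omega, Nat.cast_sub (show 5 ≤ n by omega)]
    push_cast
    ring
  have hsum14 : ∑ j ∈ univ.filter (fun j : Fin n => 1 ≤ j.val ∧ j.val ≤ n-2), v j
      = v ⟨1, hlt1⟩ + v ⟨2, hlt2⟩ + v ⟨3, hlt3⟩ + ((n:ℝ)-5) * v ⟨4, hlt4⟩ := by
    rw [sum_filter_split v (fun j : Fin n => 1 ≤ j.val ∧ j.val ≤ n-2)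
      (fun j : Fin n => j.val = 1) (fun j : Fin n => 2 ≤ j.val ∧ j.val ≤ n-2)
      (fun j => by have := j.isLt; omega) (fun j => by omega),
      sum_filter_split v (fun j : Fin n => 2 ≤ j.val ∧ j.val ≤ n-2)
      (fun j : Fin n => j.val = 2) (fun j : Fin n => 3 ≤ j.val ∧ j.val ≤ n-2)
      (fun j => by have := j.isLt; omega) (fun j => by omega),
      sum_filter_split v (fun j : Fin n => 3 ≤ j.val ∧ j.val ≤ n-2)
      (fun j : Fin n => j.val = 3) (fun j : Fin n => 4 ≤ j.val ∧ j.val ≤ n-2)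
      (fun j => by have := j.isLt; omega) (fun j => by omega),
      filter_val_eq hlt1 v, filter_val_eq hlt2 v, filter_val_eq hlt3 v, hsum4]
    ring
  -- total sum
  have hS : (∑ j : Fin n, v j) = v ⟨0, hlt0⟩ + v ⟨1, hlt1⟩ + v ⟨2, hlt2⟩ + v ⟨3, hlt3⟩
      + ((n:ℝ)-5) * v ⟨4, hlt4⟩ + v ⟨n-1, hltN⟩ := by
    rw [show (Finset.univ : Finset (Fin n))
        = univ.filter (fun j : Fin n => j.val = 0 ∨ (1 ≤ j.val ∧ j.val ≤ n-1)) from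
      (Finset.filter_true_of_mem (fun j _ => by have := j.isLt; omega)).symm]
    rw [sum_filter_split v (fun j : Fin n => j.val = 0 ∨ (1 ≤ j.val ∧ j.val ≤ n-1))
      (fun j : Fin n => j.val = 0) (fun j : Fin n => 1 ≤ j.val ∧ j.val ≤ n-1)
      (fun j => Iff.rfl) (fun j => by omega),
      sum_filter_split v (fun j : Fin n => 1 ≤ j.val ∧ j.val ≤ n-1)
      (fun j : Fin n => 1 ≤ j.val ∧ j.val ≤ n-2) (fun j : Fin n => j.val = n-1)
      (fun j => by have := j.isLt; omega) (fun j => by omega),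
      filter_val_eq hlt0 v, filter_val_eq hltN v, hsum14]
    ring
  -- row 0
  have hrow0 : μ * v ⟨0, hlt0⟩ = (∑ j : Fin n, v j) - v ⟨0, hlt0⟩
      - 2 * (v ⟨1, hlt1⟩ + v ⟨2, hlt2⟩ + v ⟨3, hlt3⟩ + ((n:ℝ)-5) * v ⟨4, hlt4⟩) := by
    have hrow := row_eval (H1edge (n-5) 1) v ⟨0, hlt0⟩
      (fun j : Fin n => 1 ≤ j.val ∧ j.val ≤ n-2)
      (fun j => by
        have := j.isLt
        show H1edge (n-5) 1 (0+1) (j.val+1) ↔ _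
        simp only [H1edge, adjPair, true_and, and_true, false_and, and_false, false_or,
          or_false, iff_true, true_iff]
        omega)
      (show ¬(1 ≤ (0:ℕ) ∧ (0:ℕ) ≤ n-2) by omega)
    rw [hsum14] at hrow
    rw [← hrowf ⟨0, hlt0⟩, hrow]
  -- row 3
  have hrow3 : μ * v ⟨3, hlt3⟩ = (∑ j : Fin n, v j) - v ⟨3, hlt3⟩
      - 2 * (v ⟨0, hlt0⟩ + v ⟨n-1, hltN⟩) := by
    have hrow := row_eval (H1edge (n-5) 1) v ⟨3, hlt3⟩
      (fun j : Fin n => j.val = 0 ∨ j.val = n-1)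
      (fun j => by
        have := j.isLt
        show H1edge (n-5) 1 (3+1) (j.val+1) ↔ _
        simp only [H1edge, adjPair, true_and, and_true, false_and, and_false, false_or,
          or_false, iff_true, true_iff]
        omega)
      (show ¬((3:ℕ) = 0 ∨ (3:ℕ) = n-1) by omega)
    rw [sum_filter_split v (fun j : Fin n => j.val = 0 ∨ j.val = n-1)
      (fun j : Fin n => j.val = 0) (fun j : Fin n => j.val = n-1)
      (fun j => Iff.rfl) (fun j => by omega), filter_val_eq hlt0 v,
      filter_val_eq hltN v] at hrow
    rw [← hrowf ⟨3, hlt3⟩, hrow]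
  -- row n-1
  have hrowN : μ * v ⟨n-1, hltN⟩ = (∑ j : Fin n, v j) - v ⟨n-1, hltN⟩
      - 2 * v ⟨3, hlt3⟩ := by
    have hrow := row_eval (H1edge (n-5) 1) v ⟨n-1, hltN⟩
      (fun j : Fin n => j.val = 3)
      (fun j => by
        have := j.isLt
        show H1edge (n-5) 1 ((n-1)+1) (j.val+1) ↔ _
        simp only [H1edge, adjPair, true_and, and_true, false_and, and_false, false_or,
          or_false, iff_true, true_iff]
        omega)
      (show ¬((n-1:ℕ) = 3) by omega)
    rw [filter_val_eq hlt3 v] at hrow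
    rw [← hrowf ⟨n-1, hltN⟩, hrow]
  -- pendant row at index 4
  have hrowP : (μ+1) * v ⟨4, hlt4⟩ = (∑ j : Fin n, v j) - 2 * v ⟨0, hlt0⟩ :=
    hpend ⟨4, hlt4⟩ (le_refl 4) (show (4:ℕ) ≤ n-2 by omega)
  -- abbreviations
  set a : ℝ := v ⟨0, hlt0⟩ with hadef
  set b : ℝ := v ⟨1, hlt1⟩ with hbdef
  set e : ℝ := v ⟨3, hlt3⟩ with hedef
  set p : ℝ := v ⟨4, hlt4⟩ with hpdef
  set q : ℝ := v ⟨n-1, hltN⟩ with hqdef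
  set s : ℝ := (n:ℝ) - 5 with hsdef
  rw [hb2] at hrow0 hrow1 hrow2 hS
  -- the five linear equations
  have E0 : μ*a + 2*b + e + s*p - q = 0 := by
    rw [hS] at hrow0; linarith
  have E1 : a + (μ+1)*b - e - s*p - q = 0 := by
    rw [hS] at hrow1; linarith [hrow1]
  have E2 : a - 2*b + μ*e - s*p + q = 0 := by
    rw [hS] at hrow3; linarith [hrow3]
  have E3 : a - 2*b - e + (μ+1-s)*p - q = 0 := by
    rw [hS] at hrowP; linarith [hrowP]
  have E4 : -a - 2*b + e - s*p + μ*q = 0 := by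
    rw [hS] at hrowN; linarith [hrowN]
  -- Cramer: quintic times each variable vanishes
  have Ha : (μ^5+2*μ^4-8*μ^3-10*μ^2+7*μ+8 - s*(μ^4+6*μ^3+4*μ^2-22*μ-21)) * a = 0 := by
    linear_combination ((1:ℝ)*μ^4 + (-1:ℝ)*μ^3*s + (2:ℝ)*μ^3 + (-5:ℝ)*μ^2*s + (-4:ℝ)*μ^2 + (-3:ℝ)*μ*s + (-2:ℝ)*μ + (9:ℝ)*s + (3:ℝ)) * E0 + ((-2:ℝ)*μ^3 + (-2:ℝ)*μ^2 + (2:ℝ)*μ + (2:ℝ)) * E1 + ((-1:ℝ)*μ^3 + (-5:ℝ)*μ^2 + (4:ℝ)*μ*s + (1:ℝ)*μ + (12:ℝ)*s + (5:ℝ)) * E2 + ((-1:ℝ)*μ^3*s + (-3:ℝ)*μ^2*s + (1:ℝ)*μ*s + (3:ℝ)*s) * E3 + ((1:ℝ)*μ^3 + (-2:ℝ)*μ^2*s + (1:ℝ)*μ^2 + (-8:ℝ)*μ*s + (-1:ℝ)*μ + (-6:ℝ)*s + (-1:ℝ)) * E4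
  have Hb : (μ^5+2*μ^4-8*μ^3-10*μ^2+7*μ+8 - s*(μ^4+6*μ^3+4*μ^2-22*μ-21)) * b = 0 := by
    linear_combination ((-1:ℝ)*μ^3 + (-1:ℝ)*μ^2 + (1:ℝ)*μ + (1:ℝ)) * E0 + ((1:ℝ)*μ^4 + (-1:ℝ)*μ^3*s + (1:ℝ)*μ^3 + (-3:ℝ)*μ^2*s + (-3:ℝ)*μ^2 + (5:ℝ)*μ*s + (-5:ℝ)*μ + (7:ℝ)*s + (-2:ℝ)) * E1 + ((1:ℝ)*μ^3 + (1:ℝ)*μ^2 + (-1:ℝ)*μ + (-1:ℝ)) * E2 + ((1:ℝ)*μ^3*s + (3:ℝ)*μ^2*s + (-5:ℝ)*μ*s + (-7:ℝ)*s) * E3 + ((1:ℝ)*μ^3 + (-1:ℝ)*μ^2 + (-5:ℝ)*μ + (-3:ℝ)) * E4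
  have He : (μ^5+2*μ^4-8*μ^3-10*μ^2+7*μ+8 - s*(μ^4+6*μ^3+4*μ^2-22*μ-21)) * e = 0 := by
    linear_combination ((-1:ℝ)*μ^3 + (-5:ℝ)*μ^2 + (4:ℝ)*μ*s + (1:ℝ)*μ + (12:ℝ)*s + (5:ℝ)) * E0 + ((2:ℝ)*μ^3 + (2:ℝ)*μ^2 + (-2:ℝ)*μ + (-2:ℝ)) * E1 + ((1:ℝ)*μ^4 + (-1:ℝ)*μ^3*s + (2:ℝ)*μ^3 + (-5:ℝ)*μ^2*s + (-4:ℝ)*μ^2 + (-3:ℝ)*μ*s + (-2:ℝ)*μ + (9:ℝ)*s + (3:ℝ)) * E2 + ((1:ℝ)*μ^3*s + (3:ℝ)*μ^2*s + (-1:ℝ)*μ*s + (-3:ℝ)*s) * E3 + ((-1:ℝ)*μ^3 + (2:ℝ)*μ^2*s + (-1:ℝ)*μ^2 + (8:ℝ)*μ*s + (1:ℝ)*μ + (6:ℝ)*s + (1:ℝ)) * E4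
  have Hp : (μ^5+2*μ^4-8*μ^3-10*μ^2+7*μ+8 - s*(μ^4+6*μ^3+4*μ^2-22*μ-21)) * p = 0 := by
    linear_combination ((-1:ℝ)*μ^3 + (-3:ℝ)*μ^2 + (1:ℝ)*μ + (3:ℝ)) * E0 + ((2:ℝ)*μ^3 + (6:ℝ)*μ^2 + (-10:ℝ)*μ + (-14:ℝ)) * E1 + ((1:ℝ)*μ^3 + (3:ℝ)*μ^2 + (-1:ℝ)*μ + (-3:ℝ)) * E2 + ((1:ℝ)*μ^4 + (1:ℝ)*μ^3 + (-9:ℝ)*μ^2 + (-1:ℝ)*μ + (8:ℝ)) * E3 + ((1:ℝ)*μ^3 + (1:ℝ)*μ^2 + (-9:ℝ)*μ + (-9:ℝ)) * E4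
  have Hq : (μ^5+2*μ^4-8*μ^3-10*μ^2+7*μ+8 - s*(μ^4+6*μ^3+4*μ^2-22*μ-21)) * q = 0 := by
    linear_combination ((1:ℝ)*μ^3 + (-2:ℝ)*μ^2*s + (1:ℝ)*μ^2 + (-8:ℝ)*μ*s + (-1:ℝ)*μ + (-6:ℝ)*s + (-1:ℝ)) * E0 + ((2:ℝ)*μ^3 + (-2:ℝ)*μ^2 + (-10:ℝ)*μ + (-6:ℝ)) * E1 + ((-1:ℝ)*μ^3 + (2:ℝ)*μ^2*s + (-1:ℝ)*μ^2 + (8:ℝ)*μ*s + (1:ℝ)*μ + (6:ℝ)*s + (1:ℝ)) * E2 + ((1:ℝ)*μ^3*s + (1:ℝ)*μ^2*s + (-9:ℝ)*μ*s + (-9:ℝ)*s) * E3 + ((1:ℝ)*μ^4 + (-1:ℝ)*μ^3*s + (2:ℝ)*μ^3 + (-5:ℝ)*μ^2*s + (-4:ℝ)*μ^2 + (-7:ℝ)*μ*s + (-10:ℝ)*μ + (-3:ℝ)*s + (-5:ℝ)) * E4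
  -- some variable is nonzero
  have hex : ∃ j : Fin n, v j ≠ 0 := by
    by_contra hall
    push_neg at hall
    exact hvne (funext fun j => hall j)
  obtain ⟨j, hj⟩ := hex
  have hquint0 : μ^5+2*μ^4-8*μ^3-10*μ^2+7*μ+8 - s*(μ^4+6*μ^3+4*μ^2-22*μ-21) = 0 := by
    have hcase : j.val = 0 ∨ j.val = 1 ∨ j.val = 2 ∨ j.val = 3
        ∨ (4 ≤ j.val ∧ j.val ≤ n-2) ∨ j.val = n-1 := by
      have := j.isLt; omega
    rcases hcase with h | h | h | h | h | h
    · rw [show j = ⟨0, hlt0⟩ from Fin.ext h, ← hadef] at hj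
      exact (mul_eq_zero.mp Ha).resolve_right hj
    · rw [show j = ⟨1, hlt1⟩ from Fin.ext h, ← hbdef] at hj
      exact (mul_eq_zero.mp Hb).resolve_right hj
    · rw [show j = ⟨2, hlt2⟩ from Fin.ext h, hb2] at hj
      exact (mul_eq_zero.mp Hb).resolve_right hj
    · rw [show j = ⟨3, hlt3⟩ from Fin.ext h, ← hedef] at hj
      exact (mul_eq_zero.mp He).resolve_right hj
    · rw [hpconst j h.1 h.2] at hj
      exact (mul_eq_zero.mp Hp).resolve_right hj
    · rw [show j = ⟨n-1, hltN⟩ from Fin.ext h, ← hqdef] at hj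
      exact (mul_eq_zero.mp Hq).resolve_right hj
  -- contradiction with positivity
  have hu : (0:ℝ) ≤ μ - ((n:ℝ)-1-10/(n:ℝ)) := by linarith
  have hqp := quintic_pos hn9 hu
  rw [show (n:ℝ)-1-10/(n:ℝ)+(μ-((n:ℝ)-1-10/(n:ℝ))) = μ from by ring] at hqp
  rw [hsdef] at hquint0
  linarith

end Aux

/-- for `n ≥ 9`, `λ₁(A(K_n,U₂⁻)) > λ₁(A(K_n,H₁(n−5,1)⁻))`. -/
theorem stmt8 (n : ℕ) (hn : 9 ≤ n) :
    lam1 (signMat n U2edge) > lam1 (signMat n (H1edge (n - 5) 1)) := by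
  obtain ⟨lam, hmem, hlam⟩ := U2_exists_big_eigen n hn
  have h1 : lam ≤ lam1 (signMat n U2edge) := le_csSup (bddAbove_spectrum _) hmem
  have h2 : lam1 (signMat n (H1edge (n - 5) 1)) ≤ (n:ℝ) - 1 - 10/(n:ℝ) := by
    apply Real.sSup_le (H1_spec_le n hn)
    have hn9 : (9:ℝ) ≤ (n:ℝ) := by exact_mod_cast hn
    have h10 : 10/(n:ℝ) ≤ 10/9 :=
      div_le_div_of_nonneg_left (by norm_num) (by norm_num) hn9
    linarith
  have := hlam
  linarith
end

section
/- For every integer n ≥ 5, the characteristic polynomial of A(K_n,H_1(0,n−4)^−) satisfies det(λI − A(K_n,H_1(0,n−4)^−)) = (λ+1)^{n−4}(λ−1)(λ³ + (5−n)λ² + (11−4n)λ + 13n − 57). -/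
/-!
Two vertices with the same neighbours apart from each other are twins. If `u, w` are twins,
then `e_u - e_w` is an eigenvector of the signed matrix `A`, with eigenvalue `1` if `u ~ w`
and `-1` otherwise; a class of `m` twins yields `m - 1` independent such eigenvectors. Here
`v₂, v₃` are adjacent twins and the `n - 4` pendant vertices at `v₄` are pairwise non-adjacent
twins, which gives the factor `(λ - 1)(λ + 1)^{n-5}`. In the basis formed by these
eigenvectors and `e_{v₁}, e_{v₂}, e_{v₄}, e_{v₅}`, the matrix `λI - A` is block triangular;
its remaining `4 × 4` block is `λI - A` with the rows of each twin class summed, and its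
determinant is `(λ + 1)` times the cubic.
-/

open Matrix

open Matrix Finset

namespace Matrix

variable {ι R : Type*} [Fintype ι] [DecidableEq ι] [CommRing R]
  (p : ι → Prop) [DecidablePred p] (r : ι → ι)

def twinShift : Matrix ι ι R := of fun i j => if p j ∧ r j = i then 1 else 0

def foldTwinRows (M : Matrix ι ι R) : Matrix ι ι R :=
  of fun i k => M i k + ∑ a ∈ univ.filter (fun a => p a ∧ r a = i), M a k

variable {p r}

lemma twinShift_mul_self (hr : ∀ k, p k → ¬ p (r k)) :
    twinShift p r * twinShift p r = (0 : Matrix ι ι R) := by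
  ext i k
  simp only [twinShift, mul_apply, of_apply, zero_apply]
  refine sum_eq_zero fun a _ => ?_
  by_cases ha : p a ∧ r a = i
  · by_cases hk : p k ∧ r k = a
    · exact absurd (hk.2 ▸ ha.1) (hr k hk.1)
    · simp [hk]
  · simp [ha]

lemma one_add_twinShift_mul (M : Matrix ι ι R) :
    (1 + twinShift p r) * M = foldTwinRows p r M := by
  ext i k
  rw [Matrix.add_mul, Matrix.one_mul]
  simp only [add_apply, foldTwinRows, of_apply, twinShift, mul_apply, ite_mul, one_mul,
    zero_mul, sum_filter]

lemma mul_one_sub_twinShift_apply (M : Matrix ι ι R) (a k : ι) :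
    (M * (1 - twinShift p r) : Matrix ι ι R) a k = M a k - if p k then M a (r k) else 0 := by
  rw [Matrix.mul_sub, Matrix.mul_one, sub_apply]
  simp only [twinShift, mul_apply, of_apply, mul_ite, mul_one, mul_zero]
  split_ifs with hk <;> simp [hk]

lemma det_foldTwinRows_mul_one_sub_twinShift (hr : ∀ k, p k → ¬ p (r k))
    (M : Matrix ι ι R) : (foldTwinRows p r (M * (1 - twinShift p r))).det = M.det := by
  have hinv : (1 - twinShift p r) * (1 + twinShift p r) = (1 : Matrix ι ι R) := by
    rw [sub_mul, one_mul, mul_add, mul_one, twinShift_mul_self hr]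
    abel
  rw [← one_add_twinShift_mul, ← Matrix.mul_assoc, det_mul, det_mul, mul_comm, ← mul_assoc,
    ← det_mul, hinv, det_one, one_mul]

lemma foldTwinRows_mul_one_sub_twinShift_apply_of_twin (hr : ∀ k, p k → ¬ p (r k))
    {M : Matrix ι ι R} {k : ι} {c : R} (hk : p k)
    (hMk : M *ᵥ (Pi.single k 1 - Pi.single (r k) 1) = c • (Pi.single k 1 - Pi.single (r k) 1))
    (i : ι) : foldTwinRows p r (M * (1 - twinShift p r)) i k = if i = k then c else 0 := by
  have hcol a : M a k - M a (r k) =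
      c * ((if a = k then 1 else 0) - if a = r k then 1 else 0) := by
    simpa [mulVec_sub, mulVec_single_one, Pi.single_apply] using congrFun hMk a
  have hfiber : ∀ a ∈ univ.filter (fun a => p a ∧ r a = i), a ≠ r k := by
    rintro a ha rfl
    exact hr k hk (mem_filter.1 ha).2.1
  have hsum : ∑ a ∈ univ.filter (fun a => p a ∧ r a = i),
      c * ((if a = k then 1 else 0) - if a = r k then 1 else 0) = if r k = i then c else 0 := by
    simp only [mul_sub, mul_ite, mul_one, mul_zero, sum_sub_distrib, sum_ite_eq',
      sum_ite_of_false hfiber, sum_const_zero, sub_zero, mem_filter, mem_univ, true_and, hk]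
  simp only [foldTwinRows, of_apply, mul_one_sub_twinShift_apply, if_pos hk, hcol, hsum]
  rcases eq_or_ne (r k) i with rfl | hri
  · have hkr : r k ≠ k := fun h => hr k hk (h.symm ▸ hk)
    simp [hkr]
  · simp [hri, hri.symm]

/-- Conjugating `M` by `1 - twinShift p r`, whose inverse is `1 + twinShift p r`, turns every
column `k` with `p k` into `μ k • e_k`, so the conjugate is block triangular. -/
theorem det_eq_prod_mul_det_foldTwinRows (M : Matrix ι ι R) (μ : ι → R)
    (hr : ∀ k, p k → ¬ p (r k))
    (hM : ∀ k, p k → M *ᵥ (Pi.single k 1 - Pi.single (r k) 1) =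
      μ k • (Pi.single k 1 - Pi.single (r k) 1)) :
    M.det = (∏ k ∈ univ.filter p, μ k) *
      (toSquareBlockProp (foldTwinRows p r M) fun i => ¬ p i).det := by
  set B := foldTwinRows p r (M * (1 - twinShift p r))
  have hcol i k (hk : p k) : B i k = if i = k then μ k else 0 :=
    foldTwinRows_mul_one_sub_twinShift_apply_of_twin hr hk (hM k hk) i
  have hrow i k (hk : ¬ p k) : B i k = foldTwinRows p r M i k := by
    simp only [B, foldTwinRows, of_apply, mul_one_sub_twinShift_apply, if_neg hk, sub_zero]
  have hdiag : toSquareBlockProp B p = diagonal fun k : {k // p k} => μ k := by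
    ext i k
    rw [toSquareBlockProp_def, of_apply, hcol _ _ k.2, diagonal_apply]
    by_cases h : i = k
    · simp [h]
    · simp [h, Subtype.coe_injective.ne h]
  rw [← det_foldTwinRows_mul_one_sub_twinShift hr M,
    twoBlockTriangular_det B p fun i hi k hk => by
      rw [hcol i k hk, if_neg (by rintro rfl; exact hi hk)],
    hdiag, det_diagonal, ← prod_subtype (univ.filter p) (fun _ => by simp)]
  congr 2
  ext i k
  exact hrow i k k.2

end Matrix

namespace H1

variable {n : ℕ}

/- With 0-based indices, vertices `0 1 2` form the triangle, `3` is `v₄`, and `4, …, n-1` are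
the pendant vertices at `v₄`; so `2` is a twin of `1`, and `5, …, n-1` are twins of `4`. -/
noncomputable def charMatrix (n : ℕ) (x : ℝ) : Matrix (Fin n) (Fin n) ℝ :=
  x • 1 - signMat n (H1edge 0 (n - 4))

lemma charMatrix_apply (x : ℝ) (i j : Fin n) :
    charMatrix n x i j =
      if i.1 = j.1 then x
      else if (i.1 < 3 ∧ j.1 < 3) ∨ (i.1 = 0 ∧ j.1 = 3) ∨ (i.1 = 3 ∧ j.1 = 0) ∨
          (i.1 = 3 ∧ 4 ≤ j.1) ∨ (j.1 = 3 ∧ 4 ≤ i.1) then 1 else -1 := by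
  have hi := i.2
  have hj := j.2
  have hedge : H1edge 0 (n - 4) (i.1 + 1) (j.1 + 1) ↔
      (i.1 < 3 ∧ j.1 < 3 ∧ i.1 ≠ j.1) ∨ (i.1 = 0 ∧ j.1 = 3) ∨ (i.1 = 3 ∧ j.1 = 0) ∨
        (i.1 = 3 ∧ 4 ≤ j.1) ∨ (j.1 = 3 ∧ 4 ≤ i.1) := by
    simp only [H1edge, adjPair]
    omega
  simp only [charMatrix, Matrix.sub_apply, Matrix.smul_apply, smul_eq_mul, one_apply, signMat,
    of_apply, Fin.ext_iff, hedge]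
  clear hedge
  split_ifs <;> first | (exfalso; omega) | ring

lemma charMatrix_apply_of_pendant (x : ℝ) {a k : Fin n} (ha : 4 < a.1) (hk : k.1 < 5) :
    charMatrix n x a k = if k.1 = 3 then 1 else -1 := by
  rw [charMatrix_apply]
  split_ifs <;> first | (exfalso; omega) | rfl

abbrev IsTwin (k : Fin n) : Prop := k.1 = 2 ∨ 5 ≤ k.1

def twinRep (hn : 5 ≤ n) (k : Fin n) : Fin n :=
  if k.1 = 2 then ⟨1, by omega⟩ else ⟨4, by omega⟩

lemma val_twinRep (hn : 5 ≤ n) (k : Fin n) :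
    (twinRep hn k).1 = if k.1 = 2 then 1 else 4 := by
  unfold twinRep
  split_ifs <;> rfl

lemma not_isTwin_twinRep (hn : 5 ≤ n) (k : Fin n) : ¬ IsTwin (twinRep hn k) := by
  simp only [IsTwin, val_twinRep]
  split_ifs <;> omega

def twinEigenvalue (x : ℝ) (k : Fin n) : ℝ := if k.1 = 2 then x - 1 else x + 1

lemma charMatrix_mulVec_twin (hn : 5 ≤ n) (x : ℝ) (k : Fin n) (hk : IsTwin k) :
    charMatrix n x *ᵥ (Pi.single k 1 - Pi.single (twinRep hn k) 1) =
      twinEigenvalue x k • (Pi.single k 1 - Pi.single (twinRep hn k) 1) := by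
  ext a
  simp only [mulVec_sub, mulVec_single_one, Pi.sub_apply, col_apply, charMatrix_apply,
    Pi.smul_apply, smul_eq_mul, Pi.single_apply, Fin.ext_iff, val_twinRep, twinEigenvalue]
  -- `omega` cannot use the hypotheses of the form `_ ∧ False` that `split_ifs` leaves
  split_ifs <;> (try simp only [and_false, false_or] at *) <;> first | (exfalso; omega) | ring

lemma prod_twinEigenvalue (hn : 5 ≤ n) (x : ℝ) :
    ∏ k ∈ univ.filter (IsTwin (n := n)), twinEigenvalue x k = (x - 1) * (x + 1) ^ (n - 5) := by
  have htwins :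
      univ.filter (IsTwin (n := n)) = insert ⟨2, by omega⟩ (Ioi ⟨4, by omega⟩) := by
    ext k
    simp only [mem_filter, mem_univ, true_and, mem_insert, mem_Ioi, Fin.ext_iff, Fin.lt_def]
    omega
  rw [htwins, prod_insert (by simp [Fin.lt_def]),
    prod_congr rfl fun k hk =>
      show twinEigenvalue x k = x + 1 from if_neg (by simp [Fin.lt_def] at hk; omega),
    prod_const, Fin.card_Ioi, twinEigenvalue, if_pos rfl, show n - 1 - 4 = n - 5 by omega]

lemma filter_twinRep_eq_of_val_eq_one (hn : 5 ≤ n) {i : Fin n} (h1 : i.1 = 1) :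
    univ.filter (fun a => IsTwin a ∧ twinRep hn a = i) = {⟨2, by omega⟩} := by
  ext a
  simp only [mem_filter, mem_univ, true_and, mem_singleton, Fin.ext_iff, val_twinRep, IsTwin]
  split_ifs <;> omega

lemma filter_twinRep_eq_of_val_eq_four (hn : 5 ≤ n) {i : Fin n} (h4 : i.1 = 4) :
    univ.filter (fun a => IsTwin a ∧ twinRep hn a = i) = Ioi ⟨4, by omega⟩ := by
  ext a
  simp only [mem_filter, mem_univ, true_and, mem_Ioi, Fin.ext_iff, Fin.lt_def, val_twinRep,
    IsTwin]
  split_ifs <;> omega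

lemma filter_twinRep_eq_empty (hn : 5 ≤ n) {i : Fin n} (h1 : i.1 ≠ 1) (h4 : i.1 ≠ 4) :
    univ.filter (fun a => IsTwin a ∧ twinRep hn a = i) = ∅ := by
  ext a
  simp only [mem_filter, mem_univ, true_and, notMem_empty, iff_false, Fin.ext_iff, val_twinRep,
    IsTwin]
  split_ifs <;> omega

lemma foldTwinRows_charMatrix_apply (hn : 5 ≤ n) (x : ℝ) (i k : Fin n) (hk : ¬ IsTwin k) :
    foldTwinRows IsTwin (twinRep hn) (charMatrix n x) i k =
      charMatrix n x i k +
        if i.1 = 1 then charMatrix n x ⟨2, by omega⟩ k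
        else if i.1 = 4 then ((n : ℝ) - 5) * (if k.1 = 3 then 1 else -1) else 0 := by
  rw [foldTwinRows, of_apply]
  congr 1
  by_cases h1 : i.1 = 1
  · rw [filter_twinRep_eq_of_val_eq_one hn h1, sum_singleton, if_pos h1]
  by_cases h4 : i.1 = 4
  · rw [filter_twinRep_eq_of_val_eq_four hn h4,
      sum_congr rfl fun a ha =>
        charMatrix_apply_of_pendant x (Fin.lt_def.1 (mem_Ioi.1 ha)) (by omega),
      sum_const, Fin.card_Ioi, nsmul_eq_mul, if_neg h1, if_pos h4,
      show n - 1 - 4 = n - 5 by omega, Nat.cast_sub hn]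
    push_cast
    split_ifs <;> ring
  · rw [filter_twinRep_eq_empty hn h1 h4, sum_empty, if_neg h1, if_neg h4]

noncomputable def quotientIndex (hn : 5 ≤ n) : Fin 4 ≃ {i : Fin n // ¬ IsTwin i} :=
  Equiv.ofBijective
    (fun a => ⟨Fin.castLE hn (![0, 1, 3, 4] a), by fin_cases a <;> simp [IsTwin]⟩)
    ⟨fun a b hab => by
      fin_cases a <;> fin_cases b <;> simp_all [Subtype.ext_iff, Fin.ext_iff],
    fun ⟨i, hi⟩ => by
      have : i.1 = 0 ∨ i.1 = 1 ∨ i.1 = 3 ∨ i.1 = 4 := by omega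
      rcases this with h | h | h | h
      exacts [⟨0, Subtype.ext (Fin.ext h.symm)⟩, ⟨1, Subtype.ext (Fin.ext h.symm)⟩,
        ⟨2, Subtype.ext (Fin.ext h.symm)⟩, ⟨3, Subtype.ext (Fin.ext h.symm)⟩]⟩

lemma val_quotientIndex (hn : 5 ≤ n) (a : Fin 4) :
    ((quotientIndex hn a : Fin n) : ℕ) = (![0, 1, 3, 4] a : Fin 5) := rfl

def quotientMatrix (n : ℕ) (x : ℝ) : Matrix (Fin 4) (Fin 4) ℝ :=
  !![x, 1, 1, -1;
     2, x + 1, -2, -2;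
     1, -1, x, 1;
     -((n : ℝ) - 4), -((n : ℝ) - 4), (n : ℝ) - 4, x - (n : ℝ) + 5]

lemma det_quotientMatrix (x : ℝ) :
    (quotientMatrix n x).det = (x + 1) *
      (x ^ 3 + (5 - (n : ℝ)) * x ^ 2 + (11 - 4 * (n : ℝ)) * x + 13 * (n : ℝ) - 57) := by
  simp [quotientMatrix, det_succ_row_zero, Fin.sum_univ_succ, Fin.succAbove]
  ring

lemma foldTwinRows_charMatrix_submatrix_quotientIndex (hn : 5 ≤ n) (x : ℝ) :
    (toSquareBlockProp (foldTwinRows IsTwin (twinRep hn) (charMatrix n x))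
      fun i => ¬ IsTwin i).submatrix (quotientIndex hn) (quotientIndex hn) =
        quotientMatrix n x := by
  ext a b
  rw [submatrix_apply, toSquareBlockProp_def, of_apply,
    foldTwinRows_charMatrix_apply hn x _ _ (quotientIndex hn b).2]
  simp only [charMatrix_apply, val_quotientIndex]
  fin_cases a <;> fin_cases b <;> norm_num [quotientMatrix] <;> ring

end H1

open H1 in
/-- for `n ≥ 5`,
`det(λI − A(K_n,H₁(0,n−4)⁻)) = (λ+1)^{n−4} (λ−1) (λ³ + (5−n)λ² + (11−4n)λ + 13n − 57)`. -/
theorem stmt10 (n : ℕ) (hn : 5 ≤ n) (x : ℝ) :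
    (x • (1 : Matrix (Fin n) (Fin n) ℝ) - signMat n (H1edge 0 (n - 4))).det =
      (x + 1) ^ (n - 4) * (x - 1) *
        (x ^ 3 + (5 - (n : ℝ)) * x ^ 2 + (11 - 4 * (n : ℝ)) * x + 13 * (n : ℝ) - 57) := by
  change (charMatrix n x).det = _
  rw [det_eq_prod_mul_det_foldTwinRows (p := IsTwin) (r := twinRep hn) _ (twinEigenvalue x)
      (fun k _ => not_isTwin_twinRep hn k) (charMatrix_mulVec_twin hn x),
    prod_twinEigenvalue hn x, ← det_submatrix_equiv_self (quotientIndex hn),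
    foldTwinRows_charMatrix_submatrix_quotientIndex, det_quotientMatrix,
    show n - 4 = n - 5 + 1 by omega, pow_succ]
  ring
end

section
/- For every integer n ≥ 9, λ1(A(K_n,H_1(1,n−5)^−)) < λ1(A(K_n,H_1(0,n−4)^−)). -/
open Matrix

/-!
Write `A` and `B` for the signed matrices of `H₁(1, n-5)` and `H₁(0, n-4)`, with vertices
labelled as in the paper (so `vₖ` is `v ⟨k - 1, _⟩`). The second graph is the first with the
pendant edge `15` moved to `45`, hence `vᵀBv = vᵀAv + 4 v₅ (v₁ - v₄)`, and it suffices to find an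
eigenvector `v` of `λ = λ₁(A)` with `v₅ (v₁ - v₄) > 0`. The vertices `5, …, n` are independent
in `H₁(1, n-5)`, so `λ ≥ n - 5 ≥ 4`. The eigen-equations `(λ + 1) vᵢ + 2 ∑_{j ∼ i} vⱼ = ∑ⱼ vⱼ`
force `v₄ = -v₁` and `(λ² - 2λ - 7) v₅ = (λ² - 9) v₁`, and `v₁ ≠ 0` because otherwise they force
`v = 0`. Hence `v₅ (v₁ - v₄) = 2 v₁ v₅ > 0`.
-/

open Finset

section Spectrum

variable {n : ℕ} {A : Matrix (Fin n) (Fin n) ℝ}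

open scoped MatrixOrder in
theorem dotProduct_mulVec_le_lam1_mul (hA : A.IsHermitian) (x : Fin n → ℝ) :
    x ⬝ᵥ (A *ᵥ x) ≤ lam1 A * (x ⬝ᵥ x) := by
  have hle : A ≤ algebraMap ℝ _ (lam1 A) :=
    le_algebraMap_of_spectrum_le (fun μ hμ => le_csSup A.finite_real_spectrum.bddAbove hμ) hA
  simpa [sub_mulVec, Algebra.algebraMap_eq_smul_one, smul_mulVec] using
    (Matrix.le_iff.mp hle).dotProduct_mulVec_nonneg x

theorem lt_lam1_of_mul_lt_dotProduct_mulVec (hA : A.IsHermitian) {x : Fin n → ℝ} {μ : ℝ}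
    (h : μ * (x ⬝ᵥ x) < x ⬝ᵥ (A *ᵥ x)) : μ < lam1 A := by
  have hx : 0 ≤ x ⬝ᵥ x := sum_nonneg fun i _ => mul_self_nonneg (x i)
  have := dotProduct_mulVec_le_lam1_mul hA x
  by_contra! hμ
  nlinarith [mul_le_mul_of_nonneg_right hμ hx]

theorem exists_mulVec_eq_lam1_smul [NeZero n] (hA : A.IsHermitian) :
    ∃ v ≠ 0, A *ᵥ v = lam1 A • v := by
  have hmem : lam1 A ∈ spectrum ℝ A := by
    refine Set.Nonempty.csSup_mem ?_ A.finite_real_spectrum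
    rw [hA.spectrum_real_eq_range_eigenvalues]
    exact Set.range_nonempty _
  rw [← Matrix.spectrum_toLin', ← Module.End.hasEigenvalue_iff_mem_spectrum] at hmem
  obtain ⟨v, hv⟩ := hmem.exists_hasEigenvector
  exact ⟨v, hv.2, by simpa using hv.apply_eq_smul⟩

end Spectrum

section SignMat

variable {n : ℕ} {E : ℕ → ℕ → Prop}

noncomputable def nbhd (E : ℕ → ℕ → Prop) (i : Fin n) : Finset (Fin n) :=
  open scoped Classical in {j | j ≠ i ∧ E (i + 1) (j + 1)}

theorem mem_nbhd {i j : Fin n} : j ∈ nbhd E i ↔ j ≠ i ∧ E (i + 1) (j + 1) := by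
  simp [nbhd]

theorem isHermitian_signMat (hE : ∀ a b, E a b → E b a) : (signMat n E).IsHermitian := by
  ext i j
  by_cases hij : i = j
  · simp [hij]
  · by_cases h : E (i + 1) (j + 1)
    · simp [signMat, hij, Ne.symm hij, h, hE _ _ h]
    · simp [signMat, hij, Ne.symm hij, h, mt (hE _ _) h]

theorem signMat_mulVec_apply (v : Fin n → ℝ) (i : Fin n) :
    (signMat n E *ᵥ v) i = ∑ j, v j - v i - 2 * ∑ j ∈ nbhd E i, v j := by
  classical
  have entry : ∀ j, signMat n E i j =
      1 - (if j = i then 1 else 0) - 2 * (if j ∈ nbhd E i then 1 else 0) := by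
    intro j
    by_cases hji : j = i
    · subst hji; simp [signMat, mem_nbhd]
    · simp only [signMat, of_apply, Ne.symm hji, ↓reduceIte, hji, sub_zero, mem_nbhd, ne_eq,
        not_false_eq_true, true_and, mul_ite, mul_one, mul_zero]
      split_ifs <;> norm_num
  simp only [mulVec, dotProduct, entry, sub_mul, sum_sub_distrib, one_mul, ite_mul, zero_mul,
    sum_ite_eq', mem_univ, if_true, mul_assoc, ← mul_sum, sum_ite_mem, univ_inter]

theorem signMat_mulVec_sub_apply (E' : ℕ → ℕ → Prop) (v : Fin n → ℝ) (i : Fin n) :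
    (signMat n E' *ᵥ v) i - (signMat n E *ᵥ v) i =
      2 * (∑ j ∈ nbhd E i, v j - ∑ j ∈ nbhd E' i, v j) := by
  rw [signMat_mulVec_apply, signMat_mulVec_apply]; ring

theorem add_one_mul_add_two_mul_sum_nbhd {v : Fin n → ℝ} {μ : ℝ}
    (hv : signMat n E *ᵥ v = μ • v) (i : Fin n) :
    (μ + 1) * v i + 2 * ∑ j ∈ nbhd E i, v j = ∑ j, v j := by
  have := congrFun hv i
  rw [signMat_mulVec_apply] at this
  simp only [Pi.smul_apply, smul_eq_mul] at this
  linarith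

theorem card_sub_one_le_lam1_signMat (hE : ∀ a b, E a b → E b a) {U : Finset (Fin n)}
    (hU : U.Nonempty) (hind : ∀ i ∈ U, ∀ j ∈ U, ¬ E (i + 1) (j + 1)) :
    (#U : ℝ) - 1 ≤ lam1 (signMat n E) := by
  classical
  set x : Fin n → ℝ := fun j => if j ∈ U then 1 else 0
  have hrow : ∀ i ∈ U, (signMat n E *ᵥ x) i = #U - 1 := by
    intro i hi
    have hN : ∑ j ∈ nbhd E i, x j = 0 :=
      sum_eq_zero fun j hj => if_neg fun hjU => hind i hi j hjU (mem_nbhd.mp hj).2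
    rw [signMat_mulVec_apply, hN]
    simp [x, hi, sum_ite_mem]
  have hxx : x ⬝ᵥ x = #U := by simp [x, dotProduct, sum_ite_mem]
  have hxMx : x ⬝ᵥ (signMat n E *ᵥ x) = #U * (#U - 1) := by
    simp only [dotProduct, x, ite_mul, one_mul, zero_mul, sum_ite_mem, univ_inter]
    rw [sum_congr rfl hrow, sum_const, nsmul_eq_mul]
  have hcard : (0 : ℝ) < #U := by exact_mod_cast hU.card_pos
  have := dotProduct_mulVec_le_lam1_mul (isHermitian_signMat hE) x
  rw [hxx, hxMx] at this
  nlinarith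

end SignMat

section H1

variable {n s t : ℕ}

theorem adjPair_symm {a b i j : ℕ} : adjPair a b i j → adjPair a b j i :=
  Or.imp And.symm And.symm ∘ Or.symm

theorem H1edge_symm {a b : ℕ} : H1edge s t a b → H1edge s t b a := by
  rintro (h | h | h | h | h | h | h | h)
  exacts [.inl (adjPair_symm h), .inr <| .inl (adjPair_symm h),
    .inr <| .inr <| .inl (adjPair_symm h), .inr <| .inr <| .inr <| .inl (adjPair_symm h),
    .inr <| .inr <| .inr <| .inr <| .inr <| .inl h, .inr <| .inr <| .inr <| .inr <| .inl h,
    .inr <| .inr <| .inr <| .inr <| .inr <| .inr <| .inr h,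
    .inr <| .inr <| .inr <| .inr <| .inr <| .inr <| .inl h]

theorem Fin.sum_univ_eq_five_add_sum_Ioi (hn : 5 ≤ n) (f : Fin n → ℝ) :
    ∑ j, f j = f ⟨0, by omega⟩ + f ⟨1, by omega⟩ + f ⟨2, by omega⟩ + f ⟨3, by omega⟩ +
      f ⟨4, by omega⟩ + ∑ j ∈ Ioi ⟨4, by omega⟩, f j := by
  rw [← sum_compl_add_sum (Ioi ⟨4, by omega⟩)]
  have hcompl : (Ioi (⟨4, by omega⟩ : Fin n))ᶜ =
      {⟨0, by omega⟩, ⟨1, by omega⟩, ⟨2, by omega⟩, ⟨3, by omega⟩, ⟨4, by omega⟩} := by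
    ext j; simp [Fin.ext_iff, Fin.lt_def]; omega
  rw [hcompl]
  simp [sum_insert, Fin.ext_iff, add_assoc]

theorem nbhd_H1edge_one (hn : 5 ≤ n) :
    nbhd (H1edge s t) (⟨1, by omega⟩ : Fin n) = {⟨0, by omega⟩, ⟨2, by omega⟩} := by
  ext j; simp [mem_nbhd, Fin.ext_iff, H1edge, adjPair]; omega

theorem nbhd_H1edge_two (hn : 5 ≤ n) :
    nbhd (H1edge s t) (⟨2, by omega⟩ : Fin n) = {⟨0, by omega⟩, ⟨1, by omega⟩} := by
  ext j; simp [mem_nbhd, Fin.ext_iff, H1edge, adjPair]; omega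

theorem nbhd_H1edge_of_pendant (hn : 5 ≤ n) {q : Fin n} (hq : s + 4 ≤ (q : ℕ))
    (hqt : (q : ℕ) < s + t + 4) : nbhd (H1edge s t) q = {⟨3, by omega⟩} := by
  ext j; simp [mem_nbhd, Fin.ext_iff, H1edge, adjPair]; omega

theorem nbhd_H1edge_one_zero (hn : 5 ≤ n) :
    nbhd (H1edge 1 (n - 5)) (⟨0, by omega⟩ : Fin n) =
      {⟨1, by omega⟩, ⟨2, by omega⟩, ⟨3, by omega⟩, ⟨4, by omega⟩} := by
  ext j; simp [mem_nbhd, Fin.ext_iff, H1edge, adjPair]; omega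

theorem nbhd_H1edge_one_three (hn : 5 ≤ n) :
    nbhd (H1edge 1 (n - 5)) (⟨3, by omega⟩ : Fin n) =
      insert ⟨0, by omega⟩ (Ioi ⟨4, by omega⟩) := by
  ext j; simp [mem_nbhd, Fin.ext_iff, Fin.lt_def, H1edge, adjPair]; omega

theorem nbhd_H1edge_one_four (hn : 5 ≤ n) :
    nbhd (H1edge 1 (n - 5)) (⟨4, by omega⟩ : Fin n) = {⟨0, by omega⟩} := by
  ext j; simp [mem_nbhd, Fin.ext_iff, H1edge, adjPair]; omega

theorem nbhd_H1edge_zero_zero (hn : 5 ≤ n) :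
    nbhd (H1edge 0 (n - 4)) (⟨0, by omega⟩ : Fin n) =
      {⟨1, by omega⟩, ⟨2, by omega⟩, ⟨3, by omega⟩} := by
  ext j; simp [mem_nbhd, Fin.ext_iff, H1edge, adjPair]; omega

theorem nbhd_H1edge_zero_three (hn : 5 ≤ n) :
    nbhd (H1edge 0 (n - 4)) (⟨3, by omega⟩ : Fin n) =
      insert ⟨0, by omega⟩ (Ici ⟨4, by omega⟩) := by
  ext j; simp [mem_nbhd, Fin.ext_iff, Fin.le_def, H1edge, adjPair]; omega

theorem sub_five_le_lam1_H1edge_one (hn : 5 ≤ n) :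
    (n : ℝ) - 5 ≤ lam1 (signMat n (H1edge 1 (n - 5))) := by
  have h := card_sub_one_le_lam1_signMat (E := H1edge 1 (n - 5)) (fun _ _ => H1edge_symm)
    (U := Ici (⟨4, by omega⟩ : Fin n)) nonempty_Ici
    (by intro i hi j hj; simp only [mem_Ici, Fin.le_def] at hi hj; unfold H1edge adjPair; omega)
  rw [Fin.card_Ici] at h
  push_cast [show 4 ≤ n by omega] at h
  linarith

theorem dotProduct_mulVec_H1edge_zero (hn : 5 ≤ n) (v : Fin n → ℝ) :
    v ⬝ᵥ (signMat n (H1edge 0 (n - 4)) *ᵥ v) = v ⬝ᵥ (signMat n (H1edge 1 (n - 5)) *ᵥ v) +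
      4 * (v ⟨4, by omega⟩ * (v ⟨0, by omega⟩ - v ⟨3, by omega⟩)) := by
  -- only the rows of the vertices 1, 4 and 5 differ
  have hδ := signMat_mulVec_sub_apply (E := H1edge 1 (n - 5)) (H1edge 0 (n - 4)) v
  have htail : ∀ q ∈ Ioi (⟨4, by omega⟩ : Fin n), v q *
      (2 * (∑ j ∈ nbhd (H1edge 1 (n - 5)) q, v j - ∑ j ∈ nbhd (H1edge 0 (n - 4)) q, v j)) = 0 := by
    intro q hq
    simp only [mem_Ioi, Fin.lt_def] at hq
    rw [nbhd_H1edge_of_pendant hn (by omega) (by omega),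
      nbhd_H1edge_of_pendant hn (by omega) (by omega), sub_self, mul_zero, mul_zero]
  rw [← sub_eq_iff_eq_add', ← dotProduct_sub, dotProduct, Fin.sum_univ_eq_five_add_sum_Ioi hn]
  simp only [Pi.sub_apply, hδ]
  rw [sum_eq_zero htail, nbhd_H1edge_one_zero hn, nbhd_H1edge_zero_zero hn, nbhd_H1edge_one hn,
    nbhd_H1edge_one hn, nbhd_H1edge_two hn, nbhd_H1edge_two hn, nbhd_H1edge_one_three hn,
    nbhd_H1edge_zero_three hn, nbhd_H1edge_one_four hn,
    nbhd_H1edge_of_pendant (s := 0) (t := n - 4) hn (q := ⟨4, by omega⟩) le_rfl (by simp; omega)]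
  simp only [mem_insert, Fin.ext_iff, OfNat.one_ne_ofNat, mem_singleton, or_self,
    not_false_eq_true, sum_insert, Nat.reduceEqDiff, sum_singleton, add_sub_add_left_eq_sub,
    add_sub_cancel_left, OfNat.zero_ne_ofNat, sub_self, mul_zero, add_zero, zero_ne_one, mem_Ioi,
    Fin.lt_def, not_lt_zero, mem_Ici, Fin.mk_le_mk, nonpos_iff_eq_zero, OfNat.ofNat_ne_zero]
  rw [← Ioi_insert, sum_insert notMem_Ioi_self]
  ring

end H1

section Eigen

variable {n : ℕ} {v : Fin n → ℝ} {μ : ℝ}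

theorem H1edge_one_eigen_zero (hn : 5 ≤ n) (hv : signMat n (H1edge 1 (n - 5)) *ᵥ v = μ • v) :
    (μ + 1) * v ⟨0, by omega⟩ + 2 * (v ⟨1, by omega⟩ + v ⟨2, by omega⟩ + v ⟨3, by omega⟩ +
      v ⟨4, by omega⟩) = ∑ j, v j := by
  have := add_one_mul_add_two_mul_sum_nbhd hv ⟨0, by omega⟩
  rw [nbhd_H1edge_one_zero hn] at this
  simpa [sum_insert, Fin.ext_iff, add_assoc] using this

theorem H1edge_one_eigen_one (hn : 5 ≤ n) (hv : signMat n (H1edge 1 (n - 5)) *ᵥ v = μ • v) :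
    (μ + 1) * v ⟨1, by omega⟩ + 2 * (v ⟨0, by omega⟩ + v ⟨2, by omega⟩) = ∑ j, v j := by
  have := add_one_mul_add_two_mul_sum_nbhd hv ⟨1, by omega⟩
  rwa [nbhd_H1edge_one hn, sum_pair (by simp [Fin.ext_iff])] at this

theorem H1edge_one_eigen_two (hn : 5 ≤ n) (hv : signMat n (H1edge 1 (n - 5)) *ᵥ v = μ • v) :
    (μ + 1) * v ⟨2, by omega⟩ + 2 * (v ⟨0, by omega⟩ + v ⟨1, by omega⟩) = ∑ j, v j := by
  have := add_one_mul_add_two_mul_sum_nbhd hv ⟨2, by omega⟩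
  rwa [nbhd_H1edge_two hn, sum_pair (by simp [Fin.ext_iff])] at this

theorem H1edge_one_eigen_three (hn : 5 ≤ n) (hv : signMat n (H1edge 1 (n - 5)) *ᵥ v = μ • v) :
    (μ + 1) * v ⟨3, by omega⟩ + 2 * (v ⟨0, by omega⟩ + ∑ j ∈ Ioi ⟨4, by omega⟩, v j) =
      ∑ j, v j := by
  have := add_one_mul_add_two_mul_sum_nbhd hv ⟨3, by omega⟩
  rwa [nbhd_H1edge_one_three hn, sum_insert (by simp [Fin.lt_def])] at this

theorem H1edge_one_eigen_four (hn : 5 ≤ n) (hv : signMat n (H1edge 1 (n - 5)) *ᵥ v = μ • v) :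
    (μ + 1) * v ⟨4, by omega⟩ + 2 * v ⟨0, by omega⟩ = ∑ j, v j := by
  have := add_one_mul_add_two_mul_sum_nbhd hv ⟨4, by omega⟩
  rwa [nbhd_H1edge_one_four hn, sum_singleton] at this

theorem H1edge_one_eigen_of_four_lt (hn : 5 ≤ n)
    (hv : signMat n (H1edge 1 (n - 5)) *ᵥ v = μ • v) {q : Fin n} (hq : q ∈ Ioi ⟨4, by omega⟩) :
    (μ + 1) * v q + 2 * v ⟨3, by omega⟩ = ∑ j, v j := by
  have := add_one_mul_add_two_mul_sum_nbhd hv q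
  simp only [mem_Ioi, Fin.lt_def] at hq
  rwa [nbhd_H1edge_of_pendant hn (by omega) (by omega), sum_singleton] at this

theorem H1edge_one_eigen_relations (hn : 5 ≤ n) (hμ : μ ≠ -1)
    (hv : signMat n (H1edge 1 (n - 5)) *ᵥ v = μ • v) :
    v ⟨0, by omega⟩ + v ⟨3, by omega⟩ = 0 ∧
      (μ ^ 2 - 2 * μ - 7) * v ⟨4, by omega⟩ = (μ ^ 2 - 9) * v ⟨0, by omega⟩ := by
  have hsum := Fin.sum_univ_eq_five_add_sum_Ioi hn v
  have R0 := H1edge_one_eigen_zero hn hv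
  have R1 := H1edge_one_eigen_one hn hv
  have R2 := H1edge_one_eigen_two hn hv
  have R3 := H1edge_one_eigen_three hn hv
  have R4 := H1edge_one_eigen_four hn hv
  have hμ1 : μ + 1 ≠ 0 := by rwa [Ne, add_eq_zero_iff_eq_neg]
  have hac : v ⟨0, by omega⟩ + v ⟨3, by omega⟩ = 0 := by
    refine (mul_eq_zero.mp ?_).resolve_left hμ1
    linear_combination R0 + R3 + 2 * hsum
  refine ⟨hac, sub_eq_zero.mp ((mul_eq_zero.mp ?_).resolve_left hμ1)⟩
  -- eliminate `v₂ + v₃` and `∑ⱼ vⱼ` from the rows of the vertices 1, 2, 3 and 5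
  linear_combination (μ ^ 2 - 2 * μ - 7 + 2 * (μ + 3)) * R4
    - (μ + 1) * (μ + 3) * (R0 - 2 * hac) + 2 * (μ + 1) * (R1 + R2)

theorem H1edge_one_eigenvector_zero_ne_zero (hn : 5 ≤ n) (hμ : 4 ≤ μ) (hv0 : v ≠ 0)
    (hv : signMat n (H1edge 1 (n - 5)) *ᵥ v = μ • v) : v ⟨0, by omega⟩ ≠ 0 := by
  intro ha
  obtain ⟨hac, hda⟩ := H1edge_one_eigen_relations hn (by linarith) hv
  have hc : v ⟨3, by omega⟩ = 0 := by linarith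
  have hd : v ⟨4, by omega⟩ = 0 := by
    rw [ha, mul_zero] at hda
    exact (mul_eq_zero.mp hda).resolve_left (by nlinarith)
  have hS : ∑ j, v j = 0 := by rw [← H1edge_one_eigen_four hn hv, ha, hd]; ring
  have R1 := H1edge_one_eigen_one hn hv
  have R2 := H1edge_one_eigen_two hn hv
  rw [ha, hS] at R1 R2
  have hb₁ : v ⟨1, by omega⟩ = 0 := by nlinarith
  have hb₂ : v ⟨2, by omega⟩ = 0 := by nlinarith
  have htail : ∀ q ∈ Ioi (⟨4, by omega⟩ : Fin n), v q = 0 := fun q hq => by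
    have Rq := H1edge_one_eigen_of_four_lt hn hv hq
    rw [hc, hS, mul_zero, add_zero] at Rq
    exact (mul_eq_zero.mp Rq).resolve_left (by linarith)
  refine hv0 (funext fun ⟨k, hk⟩ => ?_)
  rcases (by omega : k = 0 ∨ k = 1 ∨ k = 2 ∨ k = 3 ∨ k = 4 ∨ 4 < k) with
    rfl | rfl | rfl | rfl | rfl | hk4
  exacts [ha, hb₁, hb₂, hc, hd, htail _ (by simpa [Fin.lt_def] using hk4)]

theorem H1edge_one_eigenvector_pos (hn : 5 ≤ n) (hμ : 4 ≤ μ) (hv0 : v ≠ 0)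
    (hv : signMat n (H1edge 1 (n - 5)) *ᵥ v = μ • v) :
    0 < v ⟨4, by omega⟩ * (v ⟨0, by omega⟩ - v ⟨3, by omega⟩) := by
  obtain ⟨hac, hda⟩ := H1edge_one_eigen_relations hn (by linarith) hv
  have ha := H1edge_one_eigenvector_zero_ne_zero hn hμ hv0 hv
  have hpos : 0 < (μ ^ 2 - 2 * μ - 7) * (v ⟨0, by omega⟩ * v ⟨4, by omega⟩) := by
    rw [mul_left_comm, hda, ← mul_assoc, mul_comm _ (μ ^ 2 - 9), mul_assoc]
    exact mul_pos (by nlinarith) (mul_self_pos.mpr ha)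
  have had := pos_of_mul_pos_right hpos (by nlinarith)
  linear_combination 2 * had + v ⟨4, by omega⟩ * hac

end Eigen

/-- for `n ≥ 9`, `λ₁(A(K_n,H₁(1,n−5)⁻)) < λ₁(A(K_n,H₁(0,n−4)⁻))`. -/
theorem stmt11 (n : ℕ) (hn : 9 ≤ n) :
    lam1 (signMat n (H1edge 1 (n - 5))) < lam1 (signMat n (H1edge 0 (n - 4))) := by
  have h5 : 5 ≤ n := by omega
  have : NeZero n := ⟨by omega⟩
  obtain ⟨v, hv0, hv⟩ := exists_mulVec_eq_lam1_smul
    (isHermitian_signMat (n := n) (E := H1edge 1 (n - 5)) fun _ _ => H1edge_symm)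
  have hμ : 4 ≤ lam1 (signMat n (H1edge 1 (n - 5))) := by
    have : (9 : ℝ) ≤ n := by exact_mod_cast hn
    linarith [sub_five_le_lam1_H1edge_one h5]
  have hpos := H1edge_one_eigenvector_pos h5 hμ hv0 hv
  refine lt_lam1_of_mul_lt_dotProduct_mulVec (x := v)
    (isHermitian_signMat fun _ _ => H1edge_symm) ?_
  rw [dotProduct_mulVec_H1edge_zero h5, hv, dotProduct_smul, smul_eq_mul]
  linarith
end
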